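/- arXiv:2003.01849 — 4 statements merged into one kernel-verified Lean document; each statement's English description precedes it below -/
import Mathlib

section
/- Consider n ≥ 1 agents with position and velocity states x_i(k), v_i(k) ∈ ℝ^r for k ∈ ℤ and sampling period T > 0. For each i let V_i ⊆ ℝ^r be nonempty, closed and bounded with 0 ∈ V_i, max_{x∈V_i}‖S_{V_i}(x)‖ = ρ̄_i > 0 and inf{‖S_{V_i}(x)‖ : x ∉ V_i} = ρ_i > 0 (Assumption 1). For k ≥ 0 the closed loop is x_i(k+1) = x_i(k) + v_i(k)T, v_i(k+1) = S_{V_i}(y_i(k)), where y_i(k) = v_i(k) − p_i(k)v_i(k)T + π_i(k) and π_i(k) = Σ_{j≠i} a_{ij}(k)(x_j(k − τ_{ij}(k)) − x_i(k))T, with nonnegative edge weights satisfying a_{ij}(k) ≥ μ_c > 0 whenever a_{ij}(k) > 0, and integer delays 0 ≤ τ_{ij}(k) ≤ M. For k < 0 the states satisfy x_i(k+1) = x_i(k) + v_i(k)T, and v_i(0) = S_{V_i}(v_i(0)). Define e_i(k) = ‖S_{V_i}(y_i(k))‖/‖y_i(k)‖ if y_i(k) ≠ 0, e_i(k) = 1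 if y_i(k) = 0, and b_i(k) = (1 − e_i(k)(1 − p_i(k)T))/T. Assume (Assumption 2): 0 < p_i(k)T < 1, 0 < b_i(k) ≤ p_i(k+1) < 1/T for all i and k ≥ 0, and there exist constants d_i > 0 with p_i(k)² > 4d_i ≥ 4Σ_{j≠i} a_{ij}(k) for all i and k ≥ 0. Assume also (Assumption 3, joint connectivity): there exist integers 0 = k_0 < k_1 < k_2 < ⋯ with k_{m+1} − k_m ≤ η for all m, such that for each m the directed graph on {1,…,n} having an edge from j to i whenever a_{ij}(k) > 0 for some k ∈ [k_m, k_{m+1}) contains a node with a directed path to every other node. Then: (a) there exist a vector x̄ ∈ ℝ^r and constants C > 0 and μ ∈ (0,1] such that ‖x_i(k) − x̄‖ ≤ C(1−μ)^k for all i and all k ≥ 0; (b) v_i(k) ∈ V_i for all i and all k ≥ 0, and lim_{k→∞} v_i(k) = 0 for all i. -/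
/-!
Put `S_i = x_i + (2 / p_i(0)) v_i`. As `S_V(y) = e y` with `e ∈ [0, 1]`, every coordinate of the
closed loop becomes `x_i(k+1) = (1 - θ_i) x_i(k) + θ_i S_i(k)` with `θ_i = T p_i(0) / 2` and
`S_i(k+1) = κ S_i(k) + δ x_i(k) + ∑_{j ≠ i} w_ij x_j(k - τ_ij(k))` with
`w_ij = 2 e T a_ij / p_i(0)`, the weights summing to one. Since `p_i` is nondecreasing and below
`b_i`, Assumption 2 gives `δ ≥ T (p_i(0)² - 4 d_i) / (2 p_i(0)) > 0`, so positions and auxiliary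
states together form a delayed averaging system on `2n` nodes. Its maximum and minimum over a window
of `M + 1` steps are monotone; hence the positions, the inputs `y_i` and, by Assumption 1, `1 / e`
stay bounded, and the weights of all active edges exceed some `β > 0`. A node `ε` below the window
maximum is still `β^s ε` below it `s` steps later, and pulls down every node it influences. Starting
from the two halves of the current range, each window of joint connectivity adds a node to one of
the two classes, so after `2n` windows all nodes keep away from the same end: the window span
contracts by the factor `1 - β^L / 2` every `L` steps.
-/

open scoped Classical

/-- The constraint operator: `SOp V 0 = 0` and, for `x ≠ 0`,
`SOp V x = (sup B_V(x) / ‖x‖) • x` where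
`B_V(x) = {β ∈ [0, ‖x‖] : αβx/‖x‖ ∈ V for all α ∈ [0,1]}`. -/
noncomputable def SOp {r : ℕ} (V : Set (EuclideanSpace ℝ (Fin r)))
    (x : EuclideanSpace ℝ (Fin r)) : EuclideanSpace ℝ (Fin r) :=
  if x = 0 then 0
  else (sSup {β : ℝ | β ∈ Set.Icc (0 : ℝ) ‖x‖ ∧
      ∀ α ∈ Set.Icc (0 : ℝ) 1, (α * β / ‖x‖) • x ∈ V} / ‖x‖) • x

open Finset

/-! ### The constraint operator -/

namespace SOp

variable {r : ℕ} (V : Set (EuclideanSpace ℝ (Fin r)))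

/-- The set `B_V(x)`. -/
def lengths (x : EuclideanSpace ℝ (Fin r)) : Set ℝ :=
  {β : ℝ | β ∈ Set.Icc (0 : ℝ) ‖x‖ ∧ ∀ α ∈ Set.Icc (0 : ℝ) 1, (α * β / ‖x‖) • x ∈ V}

noncomputable def scaleFactor (y : EuclideanSpace ℝ (Fin r)) : ℝ :=
  if y = 0 then 1 else ‖SOp V y‖ / ‖y‖

variable {V} {x : EuclideanSpace ℝ (Fin r)}

theorem eq_of_ne_zero (hx : x ≠ 0) : SOp V x = (sSup (lengths V x) / ‖x‖) • x := by
  simp [SOp, hx, lengths]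

theorem zero_mem_lengths (h0 : 0 ∈ V) : 0 ∈ lengths V x :=
  ⟨⟨le_rfl, norm_nonneg x⟩, fun α _ => by simpa using h0⟩

theorem bddAbove_lengths : BddAbove (lengths V x) :=
  bddAbove_Icc.mono fun _ hβ => hβ.1

theorem sSup_lengths_mem (hV : IsClosed V) (h0 : 0 ∈ V) : sSup (lengths V x) ∈ lengths V x := by
  have hclosed : IsClosed (lengths V x) := by
    have : lengths V x = Set.Icc 0 ‖x‖ ∩
        ⋂ α ∈ Set.Icc (0 : ℝ) 1, (fun β : ℝ => (α * β / ‖x‖) • x) ⁻¹' V := by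
      ext; simp [lengths]
    rw [this]
    exact isClosed_Icc.inter (isClosed_biInter fun α _ => hV.preimage (by fun_prop))
  exact hclosed.csSup_mem ⟨0, zero_mem_lengths h0⟩ bddAbove_lengths

theorem norm_eq_sSup_lengths (h0 : 0 ∈ V) (hx : x ≠ 0) : ‖SOp V x‖ = sSup (lengths V x) := by
  have hsup : 0 ≤ sSup (lengths V x) := le_csSup bddAbove_lengths (zero_mem_lengths h0)
  rw [eq_of_ne_zero hx, norm_smul, Real.norm_of_nonneg (by positivity),
    div_mul_cancel₀ _ (norm_ne_zero_iff.2 hx)]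

theorem norm_le (h0 : 0 ∈ V) (x : EuclideanSpace ℝ (Fin r)) : ‖SOp V x‖ ≤ ‖x‖ := by
  by_cases hx : x = 0
  · simp [SOp, hx]
  · rw [norm_eq_sSup_lengths h0 hx]
    exact csSup_le ⟨0, zero_mem_lengths h0⟩ fun _ hβ => hβ.1.2

theorem mem (hV : IsClosed V) (h0 : 0 ∈ V) (x : EuclideanSpace ℝ (Fin r)) : SOp V x ∈ V := by
  by_cases hx : x = 0
  · simpa [SOp, hx] using h0
  · simpa [eq_of_ne_zero hx] using (sSup_lengths_mem hV h0).2 1 ⟨zero_le_one, le_rfl⟩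

theorem eq_scaleFactor_smul (h0 : 0 ∈ V) (x : EuclideanSpace ℝ (Fin r)) :
    SOp V x = scaleFactor V x • x := by
  by_cases hx : x = 0
  · simp [SOp, scaleFactor, hx]
  · rw [scaleFactor, if_neg hx, norm_eq_sSup_lengths h0 hx, eq_of_ne_zero hx]

theorem scaleFactor_mem_Icc (h0 : 0 ∈ V) (x : EuclideanSpace ℝ (Fin r)) :
    scaleFactor V x ∈ Set.Icc 0 1 := by
  by_cases hx : x = 0
  · simp [scaleFactor, hx]
  · rw [scaleFactor, if_neg hx]
    exact ⟨by positivity, div_le_one_of_le₀ (norm_le h0 x) (norm_nonneg x)⟩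

theorem lengths_smul_subset {α : ℝ} (hα₀ : 0 < α) (hα₁ : α ≤ 1) :
    lengths V (α • x) ⊆ lengths V x := by
  rintro β ⟨⟨hβ₀, hβ⟩, hseg⟩
  rw [norm_smul, Real.norm_of_nonneg hα₀.le] at hβ hseg
  refine ⟨⟨hβ₀, hβ.trans (mul_le_of_le_one_left (norm_nonneg x) hα₁)⟩, fun γ hγ => ?_⟩
  by_cases hx : x = 0
  · simpa [hx] using hseg 0 ⟨le_rfl, zero_le_one⟩
  convert hseg γ hγ using 1
  rw [smul_smul]
  congr 1
  field_simp

theorem min_le_norm (h0 : 0 ∈ V) {ρ : ℝ} (hρ : ∀ y ∉ V, ρ ≤ ‖SOp V y‖)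
    (x : EuclideanSpace ℝ (Fin r)) : min ρ ‖x‖ ≤ ‖SOp V x‖ := by
  by_cases hx : x = 0
  · simp [SOp, hx]
  rw [norm_eq_sSup_lengths h0 hx]
  by_cases hseg : ∀ α ∈ Set.Icc (0 : ℝ) 1, α • x ∈ V
  · refine (min_le_right _ _).trans (le_csSup bddAbove_lengths ⟨⟨norm_nonneg x, le_rfl⟩, ?_⟩)
    intro α hα
    simpa [mul_div_assoc, div_self (norm_ne_zero_iff.2 hx)] using hseg α hα
  push Not at hseg
  obtain ⟨α, hα, hαx⟩ := hseg
  have hα₀ : 0 < α := lt_of_le_of_ne hα.1 (by rintro rfl; simp [h0] at hαx)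
  have hαx0 : α • x ≠ 0 := smul_ne_zero hα₀.ne' hx
  calc min ρ ‖x‖ ≤ ‖SOp V (α • x)‖ := (min_le_left _ _).trans (hρ _ hαx)
    _ = sSup (lengths V (α • x)) := norm_eq_sSup_lengths h0 hαx0
    _ ≤ sSup (lengths V x) := csSup_le_csSup bddAbove_lengths ⟨0, zero_mem_lengths h0⟩
          (lengths_smul_subset hα₀ hα.2)

theorem exists_pos_le_scaleFactor (h0 : 0 ∈ V) {ρ : ℝ} (hρ₀ : 0 < ρ)
    (hρ : ∀ y ∉ V, ρ ≤ ‖SOp V y‖) {ι : Type*} {y : ι → EuclideanSpace ℝ (Fin r)} {Y : ℝ}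
    (hY : ∀ k, ‖y k‖ ≤ Y) : ∃ ε > 0, ∀ k, ε ≤ scaleFactor V (y k) := by
  refine ⟨min 1 (ρ / (|Y| + 1)), by positivity, fun k => ?_⟩
  by_cases hy : y k = 0
  · simp [scaleFactor, hy]
  have hy₀ : 0 < ‖y k‖ := norm_pos_iff.2 hy
  have hyY : ‖y k‖ ≤ |Y| + 1 := by linarith [hY k, le_abs_self Y]
  rw [scaleFactor, if_neg hy, le_div_iff₀ hy₀]
  rcases le_total ρ ‖y k‖ with h | h
  · calc min 1 (ρ / (|Y| + 1)) * ‖y k‖ ≤ ρ / (|Y| + 1) * (|Y| + 1) := by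
          gcongr; exact min_le_right _ _
      _ = ρ := div_mul_cancel₀ _ (by positivity)
      _ = min ρ ‖y k‖ := (min_eq_left h).symm
      _ ≤ _ := min_le_norm h0 hρ _
  · calc min 1 (ρ / (|Y| + 1)) * ‖y k‖ ≤ 1 * ‖y k‖ := by gcongr; exact min_le_left _ _
      _ = min ρ ‖y k‖ := by rw [one_mul, min_eq_right h]
      _ ≤ _ := min_le_norm h0 hρ _

end SOp

/-! ### Delayed averaging -/

theorem Relation.ReflTransGen.exists_leaving {α : Type*} {r : α → α → Prop} {p : α → Prop}
    {a b : α} (hab : ReflTransGen r a b) (ha : p a) (hb : ¬ p b) :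
    ∃ u v, p u ∧ ¬ p v ∧ r u v := by
  induction hab with
  | refl => exact absurd ha hb
  | @tail b' _ _ hstep ih =>
    by_cases hb' : p b'
    · exact ⟨b', _, hb', hb, hstep⟩
    · exact ih hb'

section DelayedAveraging

variable {ι : Type*}

def InfluencesDuring (c : ℕ → ι → ι → ℝ) (β : ℝ) (t P : ℕ) (u v : ι) : Prop :=
  ∃ k, t ≤ k ∧ k < t + P ∧ u ≠ v ∧ β ≤ c k v u

def JointlyRooted (c : ℕ → ι → ι → ℝ) (β : ℝ) (P : ℕ) : Prop :=
  ∀ t, ∃ root, ∀ u, Relation.ReflTransGen (InfluencesDuring c β t P) root u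

theorem jointlyRooted_of_rooted {a c : ℕ → ι → ι → ℝ} {β : ℝ} {P : ℕ}
    (hac : ∀ k u v, 0 < a k u v → β ≤ c k u v)
    (hconn : ∀ t, ∃ root, ∀ u, Relation.ReflTransGen
      (fun u v => ∃ k, t ≤ k ∧ k < t + P ∧ 0 < a k v u) root u) :
    JointlyRooted c β P := by
  intro t
  obtain ⟨root, hroot⟩ := hconn t
  refine ⟨root, fun u => Relation.reflTransGen_closed ?_ _ _ (hroot u)⟩
  rintro u v ⟨k, htk, hkt, ha⟩
  by_cases huv : u = v
  · exact huv ▸ .refl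
  · exact .single ⟨k, htk, hkt, huv, hac k v u ha⟩

def WindowLE (M : ℕ) (z : ℤ → ι → ℝ) (t : ℕ) (u : ι) (b : ℝ) : Prop :=
  ∀ l ∈ Set.Icc ((t : ℤ) - M) t, z l u ≤ b

/-- The nodes of `G` are stated for `-z`: their windows stay `ε` above `a`. -/
def AwayCover (M : ℕ) (z : ℤ → ι → ℝ) (t : ℕ) (a b ε : ℝ) (F G : Finset ι) : Prop :=
  (∀ u, u ∈ F ∨ u ∈ G) ∧ (∀ u ∈ F, WindowLE M z t u (b - ε)) ∧
    ∀ u ∈ G, WindowLE M (-z) t u (-a - ε)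

variable [Fintype ι]

structure IsDelayedAveraging (M : ℕ) (z : ℤ → ι → ℝ) (c : ℕ → ι → ι → ℝ)
    (D : ℕ → ι → ι → ℤ) : Prop where
  coeff_nonneg : ∀ k u v, 0 ≤ c k u v
  sum_coeff : ∀ k u, ∑ v, c k u v = 1
  delay_self : ∀ k u, D k u u = k
  delay_mem : ∀ (k : ℕ) u v, D k u v ∈ Set.Icc ((k : ℤ) - M) k
  step : ∀ (k : ℕ) (u : ι), z ((k : ℤ) + 1) u = ∑ v, c k u v * z (D k u v) v

noncomputable def windowMax [Nonempty ι] (M : ℕ) (z : ℤ → ι → ℝ) (k : ℕ) : ℝ :=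
  (Icc ((k : ℤ) - M) k ×ˢ (univ : Finset ι)).sup'
    ((nonempty_Icc.2 (by omega)).product univ_nonempty) fun q => z q.1 q.2

noncomputable def windowMin [Nonempty ι] (M : ℕ) (z : ℤ → ι → ℝ) (k : ℕ) : ℝ :=
  -windowMax M (-z) k

section Window

variable [Nonempty ι] {M : ℕ} {z : ℤ → ι → ℝ} {k : ℕ}

theorem windowMax_le_iff {b : ℝ} : windowMax M z k ≤ b ↔ ∀ u, WindowLE M z k u b := by
  simp only [windowMax, sup'_le_iff, mem_product, mem_Icc, mem_univ, and_true, Prod.forall,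
    WindowLE, Set.mem_Icc]
  exact forall_comm

theorem le_windowMax {l : ℤ} (hl : l ∈ Set.Icc ((k : ℤ) - M) k) (u : ι) :
    z l u ≤ windowMax M z k :=
  windowMax_le_iff.1 le_rfl u l hl

theorem windowMin_le {l : ℤ} (hl : l ∈ Set.Icc ((k : ℤ) - M) k) (u : ι) :
    windowMin M z k ≤ z l u :=
  neg_le.1 (le_windowMax (z := -z) hl u)

theorem windowMin_le_windowMax : windowMin M z k ≤ windowMax M z k := by
  obtain ⟨u⟩ := ‹Nonempty ι›
  have hk : (k : ℤ) ∈ Set.Icc ((k : ℤ) - M) k := ⟨by omega, le_rfl⟩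
  exact (windowMin_le hk u).trans (le_windowMax hk u)

end Window

namespace IsDelayedAveraging

variable {M : ℕ} {z : ℤ → ι → ℝ} {c : ℕ → ι → ι → ℝ} {D : ℕ → ι → ι → ℤ}

theorem neg (hz : IsDelayedAveraging M z c D) : IsDelayedAveraging M (-z) c D where
  coeff_nonneg := hz.coeff_nonneg
  sum_coeff := hz.sum_coeff
  delay_self := hz.delay_self
  delay_mem := hz.delay_mem
  step k u := by simp [hz.step k u]

theorem coeff_le_one (hz : IsDelayedAveraging M z c D) (k : ℕ) (u v : ι) : c k u v ≤ 1 :=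
  hz.sum_coeff k u ▸ single_le_sum (fun w _ => hz.coeff_nonneg k u w) (mem_univ v)

variable [Nonempty ι]

theorem step_le_sub (hz : IsDelayedAveraging M z c D) {k : ℕ} {u v : ι} {H ε : ℝ}
    (hH : windowMax M z k ≤ H) (hv : z (D k u v) v ≤ H - ε) :
    z (k + 1) u ≤ H - c k u v * ε := by
  have hgap : H - z (k + 1) u = ∑ w, c k u w * (H - z (D k u w) w) := by
    simp only [hz.step, mul_sub, sum_sub_distrib, ← sum_mul, hz.sum_coeff, one_mul]
  have hv' : c k u v * (H - z (D k u v) v) ≤ H - z (k + 1) u :=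
    hgap ▸ single_le_sum (fun w _ => mul_nonneg (hz.coeff_nonneg k u w)
      (sub_nonneg.2 ((le_windowMax (hz.delay_mem k u w) w).trans hH))) (mem_univ v)
  nlinarith [hz.coeff_nonneg k u v]

theorem windowMax_antitone (hz : IsDelayedAveraging M z c D) : Antitone (windowMax M z) := by
  refine antitone_nat_of_succ_le fun k => windowMax_le_iff.2 fun u l ⟨hl₁, hl₂⟩ => ?_
  push_cast at hl₁ hl₂
  rcases eq_or_lt_of_le hl₂ with rfl | hlt
  · simpa using hz.step_le_sub (v := u) (ε := 0) le_rfl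
      (by simpa using le_windowMax (hz.delay_mem k u u) u)
  · exact le_windowMax ⟨by omega, by omega⟩ u

theorem windowMin_monotone (hz : IsDelayedAveraging M z c D) : Monotone (windowMin M z) :=
  fun _ _ hkk => neg_le_neg (hz.neg.windowMax_antitone hkk)

theorem le_windowMax_of_le (hz : IsDelayedAveraging M z c D) {k : ℕ} {l : ℤ}
    (hl : (k : ℤ) - M ≤ l) (u : ι) : z l u ≤ windowMax M z k := by
  by_cases hlk : l ≤ k
  · exact le_windowMax ⟨hl, hlk⟩ u
  · lift l to ℕ using by omega
    exact (le_windowMax ⟨by omega, le_rfl⟩ u).trans (hz.windowMax_antitone (by omega))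

theorem exists_abs_le (hz : IsDelayedAveraging M z c D) :
    ∃ B, ∀ l : ℤ, -(M : ℤ) ≤ l → ∀ u, |z l u| ≤ B :=
  ⟨max (windowMax M z 0) (windowMax M (-z) 0), fun l hl u => abs_le'.2
    ⟨(hz.le_windowMax_of_le (by simpa using hl) u).trans (le_max_left _ _),
      (hz.neg.le_windowMax_of_le (by simpa using hl) u).trans (le_max_right _ _)⟩⟩

variable {β : ℝ}

theorem le_one_of_le_coeff (hz : IsDelayedAveraging M z c D) (hself : ∀ k u, β ≤ c k u u) :
    β ≤ 1 :=
  (hself 0 (Classical.arbitrary ι)).trans (hz.coeff_le_one _ _ _)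

theorem le_sub_pow_mul (hz : IsDelayedAveraging M z c D) (hβ : 0 ≤ β)
    (hself : ∀ k u, β ≤ c k u u) {k₀ t : ℕ} {u : ι} {H ε : ℝ} (hH : windowMax M z k₀ ≤ H)
    (ht : k₀ ≤ t) (hε : 0 ≤ ε) (hlow : z t u ≤ H - ε) (s : ℕ) :
    z ((t + s : ℕ) : ℤ) u ≤ H - β ^ s * ε := by
  induction s with
  | zero => simpa using hlow
  | succ s ih =>
    have hstep := hz.step_le_sub (k := t + s) (v := u)
      ((hz.windowMax_antitone (by omega)).trans hH) (by rwa [hz.delay_self])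
    have hgain : β ^ (s + 1) * ε ≤ c (t + s) u u * (β ^ s * ε) := by
      rw [pow_succ', mul_assoc]
      exact mul_le_mul_of_nonneg_right (hself _ u) (mul_nonneg (pow_nonneg hβ s) hε)
    rw [← add_assoc, Nat.cast_succ]
    linarith

theorem windowLE_of_le_sub (hz : IsDelayedAveraging M z c D) (hβ : 0 ≤ β)
    (hself : ∀ k u, β ≤ c k u u) {k₀ t t' : ℕ} {u : ι} {H ε : ℝ} (hH : windowMax M z k₀ ≤ H)
    (ht : k₀ ≤ t) (hε : 0 ≤ ε) (hlow : z t u ≤ H - ε) (ht' : t + M ≤ t') :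
    WindowLE M z t' u (H - β ^ (t' - t) * ε) := by
  intro l ⟨hl₁, hl₂⟩
  lift l to ℕ using by omega
  obtain ⟨s, rfl⟩ := Nat.exists_eq_add_of_le (show t ≤ l by omega)
  have hpow : β ^ (t' - t) ≤ β ^ s :=
    pow_le_pow_of_le_one hβ (hz.le_one_of_le_coeff hself) (by omega)
  have := hz.le_sub_pow_mul hβ hself hH ht hε hlow s
  nlinarith

theorem windowLE_of_windowLE (hz : IsDelayedAveraging M z c D) (hβ : 0 ≤ β)
    (hself : ∀ k u, β ≤ c k u u) {k₀ t t' : ℕ} {u : ι} {H ε : ℝ} (hH : windowMax M z k₀ ≤ H)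
    (ht : k₀ ≤ t) (hε : 0 ≤ ε) (hlow : WindowLE M z t u (H - ε)) (htt' : t ≤ t') :
    WindowLE M z t' u (H - β ^ (t' - t) * ε) := by
  intro l ⟨hl₁, hl₂⟩
  have hβ₁ := hz.le_one_of_le_coeff hself
  by_cases hlt : l ≤ t
  · have := pow_le_one₀ (n := t' - t) hβ hβ₁
    nlinarith [hlow l ⟨by omega, hlt⟩]
  · lift l to ℕ using by omega
    obtain ⟨s, rfl⟩ := Nat.exists_eq_add_of_le (show t ≤ l by omega)
    have hpow : β ^ (t' - t) ≤ β ^ s := pow_le_pow_of_le_one hβ hβ₁ (by omega)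
    have := hz.le_sub_pow_mul hβ hself hH ht hε (hlow t ⟨by omega, le_rfl⟩) s
    nlinarith

theorem windowLE_of_influence (hz : IsDelayedAveraging M z c D) (hβ : 0 ≤ β)
    (hself : ∀ k u, β ≤ c k u u) {k₀ t k t' : ℕ} {u v : ι} {H ε : ℝ}
    (hH : windowMax M z k₀ ≤ H) (ht : k₀ ≤ t) (hε : 0 ≤ ε) (hlow : WindowLE M z t u (H - ε))
    (htk : t ≤ k) (hedge : β ≤ c k v u) (ht' : k + 1 + M ≤ t') :
    WindowLE M z t' v (H - β ^ (t' - t) * ε) := by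
  have hεk : 0 ≤ β ^ (k - t) * ε := mul_nonneg (pow_nonneg hβ _) hε
  have hHk : windowMax M z k ≤ H := (hz.windowMax_antitone (ht.trans htk)).trans hH
  have hv : z ((k + 1 : ℕ) : ℤ) v ≤ H - β ^ (k + 1 - t) * ε := by
    have hstep := hz.step_le_sub hHk
      (hz.windowLE_of_windowLE hβ hself hH ht hε hlow htk _ (hz.delay_mem k v u))
    rw [show k + 1 - t = (k - t) + 1 by omega, pow_succ', mul_assoc, Nat.cast_succ]
    nlinarith [mul_le_mul_of_nonneg_right hedge hεk]
  have := hz.windowLE_of_le_sub hβ hself hH (by omega) (mul_nonneg (pow_nonneg hβ _) hε) hv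
    (t' := t') (by omega)
  rwa [← mul_assoc, ← pow_add, show t' - (k + 1) + (k + 1 - t) = t' - t by omega] at this

theorem exists_windowLE_of_rooted (hz : IsDelayedAveraging M z c D) (hβ : 0 ≤ β)
    (hself : ∀ k u, β ≤ c k u u) {k₀ t P : ℕ} {H ε : ℝ} (hH : windowMax M z k₀ ≤ H)
    (ht : k₀ ≤ t) (hε : 0 ≤ ε) {F : Finset ι} (hF : ∀ u ∈ F, WindowLE M z t u (H - ε))
    {root i : ι} (hroot : root ∈ F) (hi : i ∉ F)
    (hpath : Relation.ReflTransGen (InfluencesDuring c β t P) root i) :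
    ∃ v ∉ F, WindowLE M z (t + (P + M + 1)) v (H - β ^ (P + M + 1) * ε) := by
  obtain ⟨u, v, hu, hv, k, htk, hkt, -, hedge⟩ := hpath.exists_leaving (p := (· ∈ F)) hroot hi
  refine ⟨v, hv, ?_⟩
  have := hz.windowLE_of_influence hβ hself hH ht hε (hF u hu) htk hedge
    (t' := t + (P + M + 1)) (by omega)
  rwa [Nat.add_sub_cancel_left] at this

theorem exists_awayCover_start (hz : IsDelayedAveraging M z c D) (hβ : 0 ≤ β)
    (hself : ∀ k u, β ≤ c k u u) {k₀ : ℕ} {a b : ℝ} (ha : a ≤ windowMin M z k₀)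
    (hb : windowMax M z k₀ ≤ b) :
    ∃ F G, AwayCover M z (k₀ + M) a b (β ^ M * ((b - a) / 2)) F G ∧
      Fintype.card ι ≤ #F + #G := by
  classical
  have hε : 0 ≤ (b - a) / 2 := by linarith [(ha.trans windowMin_le_windowMax).trans hb]
  refine ⟨univ.filter (fun u => z k₀ u ≤ b - (b - a) / 2),
    univ.filter (fun u => ¬ z k₀ u ≤ b - (b - a) / 2),
    ⟨fun u => (em _).imp (mem_filter.2 ⟨mem_univ u, ·⟩) (mem_filter.2 ⟨mem_univ u, ·⟩),
      fun u hu => ?_, fun u hu => ?_⟩, by rw [card_filter_add_card_filter_not]; simp⟩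
  · simpa using hz.windowLE_of_le_sub hβ hself hb le_rfl hε (mem_filter.1 hu).2 le_rfl
  · have hlow : (-z) k₀ u ≤ -a - (b - a) / 2 := by
      have := (mem_filter.1 hu).2
      simp only [Pi.neg_apply]
      linarith
    simpa using hz.neg.windowLE_of_le_sub hβ hself (le_neg.1 ha) le_rfl hε hlow le_rfl

theorem awayCover_later (hz : IsDelayedAveraging M z c D) (hβ : 0 ≤ β)
    (hself : ∀ k u, β ≤ c k u u) {k₀ t t' : ℕ} {a b ε : ℝ} {F G : Finset ι}
    (ha : a ≤ windowMin M z k₀) (hb : windowMax M z k₀ ≤ b) (ht : k₀ ≤ t) (hε : 0 ≤ ε)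
    (hcover : AwayCover M z t a b ε F G) (htt' : t ≤ t') :
    AwayCover M z t' a b (β ^ (t' - t) * ε) F G :=
  ⟨hcover.1, fun u hu => hz.windowLE_of_windowLE hβ hself hb ht hε (hcover.2.1 u hu) htt',
    fun u hu => hz.neg.windowLE_of_windowLE hβ hself (le_neg.1 ha) ht hε (hcover.2.2 u hu) htt'⟩

theorem exists_awayCover_grow (hz : IsDelayedAveraging M z c D) (hβ : 0 ≤ β)
    (hself : ∀ k u, β ≤ c k u u) {P : ℕ} (hconn : JointlyRooted c β P) {k₀ t : ℕ}
    {a b ε : ℝ} {F G : Finset ι} (ha : a ≤ windowMin M z k₀) (hb : windowMax M z k₀ ≤ b)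
    (ht : k₀ ≤ t) (hε : 0 ≤ ε) (hcover : AwayCover M z t a b ε F G) (hF : F ≠ univ)
    (hG : G ≠ univ) :
    ∃ F' G', AwayCover M z (t + (P + M + 1)) a b (β ^ (P + M + 1) * ε) F' G' ∧
      #F + #G < #F' + #G' := by
  classical
  have hlater := hz.awayCover_later hβ hself ha hb ht hε hcover (t' := t + (P + M + 1)) (by omega)
  rw [Nat.add_sub_cancel_left] at hlater
  obtain ⟨root, hroot⟩ := hconn t
  rcases hcover.1 root with hrF | hrG
  · obtain ⟨i, hi⟩ : ∃ i, i ∉ F := by simpa [eq_univ_iff_forall] using hF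
    obtain ⟨v, hv, hvlow⟩ :=
      hz.exists_windowLE_of_rooted hβ hself hb ht hε hcover.2.1 hrF hi (hroot i)
    refine ⟨insert v F, G, ⟨fun u => (hcover.1 u).imp_left (mem_insert_of_mem ·),
      fun u hu => ?_, hlater.2.2⟩, by rw [card_insert_of_notMem hv]; omega⟩
    rcases mem_insert.1 hu with rfl | hu
    exacts [hvlow, hlater.2.1 u hu]
  · obtain ⟨i, hi⟩ : ∃ i, i ∉ G := by simpa [eq_univ_iff_forall] using hG
    obtain ⟨v, hv, hvlow⟩ :=
      hz.neg.exists_windowLE_of_rooted hβ hself (le_neg.1 ha) ht hε hcover.2.2 hrG hi (hroot i)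
    refine ⟨F, insert v G, ⟨fun u => (hcover.1 u).imp_right (mem_insert_of_mem ·), hlater.2.1,
      fun u hu => ?_⟩, by rw [card_insert_of_notMem hv]; omega⟩
    rcases mem_insert.1 hu with rfl | hu
    exacts [hvlow, hlater.2.2 u hu]

/-- Every stage of `P + M + 1` steps moves one more node into one of the two classes. -/
theorem exists_awayCover (hz : IsDelayedAveraging M z c D) (hβ : 0 ≤ β)
    (hself : ∀ k u, β ≤ c k u u) {P : ℕ} (hconn : JointlyRooted c β P) {k₀ : ℕ} {a b : ℝ}
    (ha : a ≤ windowMin M z k₀) (hb : windowMax M z k₀ ≤ b) (s : ℕ) :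
    ∃ F G, AwayCover M z (k₀ + (M + s * (P + M + 1))) a b
        (β ^ (M + s * (P + M + 1)) * ((b - a) / 2)) F G ∧
      (F = univ ∨ G = univ ∨ Fintype.card ι + s ≤ #F + #G) := by
  have hε : 0 ≤ (b - a) / 2 := by linarith [(ha.trans windowMin_le_windowMax).trans hb]
  induction s with
  | zero =>
    obtain ⟨F, G, hcover, hcard⟩ := hz.exists_awayCover_start hβ hself ha hb
    exact ⟨F, G, by simpa using hcover, .inr (.inr hcard)⟩
  | succ s ih =>
    obtain ⟨F, G, hcover, hsize⟩ := ih
    have hεs := mul_nonneg (pow_nonneg hβ (M + s * (P + M + 1))) hε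
    have htime : k₀ + (M + s * (P + M + 1)) + (P + M + 1) = k₀ + (M + (s + 1) * (P + M + 1)) := by
      ring
    have hlevel : β ^ (P + M + 1) * (β ^ (M + s * (P + M + 1)) * ((b - a) / 2))
        = β ^ (M + (s + 1) * (P + M + 1)) * ((b - a) / 2) := by
      rw [← mul_assoc, ← pow_add]; ring_nf
    by_cases hdone : F = univ ∨ G = univ
    · have := hz.awayCover_later hβ hself ha hb (by omega) hεs hcover
        (t' := k₀ + (M + s * (P + M + 1)) + (P + M + 1)) (by omega)
      rw [Nat.add_sub_cancel_left, hlevel, htime] at this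
      exact ⟨F, G, this, hdone.elim .inl (.inr ∘ .inl)⟩
    push Not at hdone
    obtain ⟨F', G', hcover', hgrow⟩ := hz.exists_awayCover_grow hβ hself hconn ha hb
      (by omega) hεs hcover hdone.1 hdone.2
    rw [hlevel, htime] at hcover'
    have hsize := (hsize.resolve_left hdone.1).resolve_left hdone.2
    exact ⟨F', G', hcover', .inr (.inr (by omega))⟩

theorem windowMax_sub_windowMin_le (hz : IsDelayedAveraging M z c D) (hβ : 0 ≤ β)
    (hself : ∀ k u, β ≤ c k u u) {P : ℕ} (hconn : JointlyRooted c β P) (k₀ : ℕ) :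
    windowMax M z (k₀ + (M + Fintype.card ι * (P + M + 1)))
        - windowMin M z (k₀ + (M + Fintype.card ι * (P + M + 1)))
      ≤ (1 - β ^ (M + Fintype.card ι * (P + M + 1)) / 2)
        * (windowMax M z k₀ - windowMin M z k₀) := by
  classical
  obtain ⟨F, G, ⟨-, hF, hG⟩, hsize⟩ :=
    hz.exists_awayCover hβ hself hconn (k₀ := k₀) le_rfl le_rfl (Fintype.card ι)
  have hmax := hz.windowMax_antitone (k₀.le_add_right (M + Fintype.card ι * (P + M + 1)))
  have hmin := hz.windowMin_monotone (k₀.le_add_right (M + Fintype.card ι * (P + M + 1)))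
  have hdone : F = univ ∨ G = univ := by
    have := card_le_univ F
    have := card_le_univ G
    rcases hsize with h | h | h
    exacts [.inl h, .inr h, .inl (eq_univ_of_card F (by omega))]
  rcases hdone with rfl | rfl
  · have := windowMax_le_iff.2 fun u => hF u (mem_univ u)
    linarith
  · have := windowMax_le_iff.2 fun u => hG u (mem_univ u)
    have hneg : windowMin M z (k₀ + (M + Fintype.card ι * (P + M + 1)))
        = -windowMax M (-z) (k₀ + (M + Fintype.card ι * (P + M + 1))) := rfl
    linarith

theorem exists_abs_sub_le (hz : IsDelayedAveraging M z c D) :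
    ∃ zbar, ∀ (k : ℕ) u, |z k u - zbar| ≤ windowMax M z k - windowMin M z k := by
  have hbdd : BddAbove (Set.range (windowMin M z)) :=
    ⟨windowMax M z 0, Set.forall_mem_range.2 fun k =>
      windowMin_le_windowMax.trans (hz.windowMax_antitone k.zero_le)⟩
  have hk : ∀ k : ℕ, (k : ℤ) ∈ Set.Icc ((k : ℤ) - M) k := fun k => ⟨by omega, le_rfl⟩
  refine ⟨⨆ k, windowMin M z k, fun k u => abs_sub_le_iff.2 ⟨?_, ?_⟩⟩
  · linarith [le_windowMax (z := z) (hk k) u, le_ciSup hbdd k]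
  · have : ⨆ k, windowMin M z k ≤ windowMax M z k := ciSup_le fun j =>
      (hz.windowMin_monotone (le_max_left j k)).trans
        (windowMin_le_windowMax.trans (hz.windowMax_antitone (le_max_right j k)))
    linarith [windowMin_le (z := z) (hk k) u]

end IsDelayedAveraging

theorem Antitone.le_geometric_of_le_mul {f : ℕ → ℝ} (hf : Antitone f) (hf₀ : 0 ≤ f 0)
    {γ : ℝ} (hγ₀ : 0 < γ) (hγ₁ : γ ≤ 1) {L : ℕ} (hL : 0 < L)
    (hstep : ∀ k, f (k + L) ≤ γ * f k) (k : ℕ) :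
    f k ≤ f 0 / γ * (γ ^ (L : ℝ)⁻¹) ^ k := by
  have hmul : ∀ j, f (j * L) ≤ γ ^ j * f 0 := by
    intro j
    induction j with
    | zero => simp
    | succ j ih =>
      calc f ((j + 1) * L) = f (j * L + L) := by rw [add_one_mul]
        _ ≤ γ * (γ ^ j * f 0) := (hstep _).trans (mul_le_mul_of_nonneg_left ih hγ₀.le)
        _ = γ ^ (j + 1) * f 0 := by ring
  have hexp : (k : ℝ) / L - 1 ≤ (k / L : ℕ) := by
    have hk : k < k / L * L + L := Nat.lt_div_mul_add hL
    rw [div_sub_one (by positivity), div_le_iff₀ (by positivity)]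
    have : (k : ℝ) < (k / L : ℕ) * L + L := by exact_mod_cast hk
    linarith
  have hrpow : γ ^ ((k : ℝ) / L - 1) = (γ ^ (L : ℝ)⁻¹) ^ k / γ := by
    rw [Real.rpow_sub_one hγ₀.ne', ← Real.rpow_natCast, ← Real.rpow_mul hγ₀.le, inv_mul_eq_div]
  calc f k ≤ f (k / L * L) := hf (Nat.div_mul_le_self k L)
    _ ≤ γ ^ (k / L) * f 0 := hmul _
    _ ≤ γ ^ ((k : ℝ) / L - 1) * f 0 := by
      rw [← Real.rpow_natCast]
      exact mul_le_mul_of_nonneg_right (Real.rpow_le_rpow_of_exponent_ge hγ₀ hγ₁ hexp) hf₀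
    _ = f 0 / γ * (γ ^ (L : ℝ)⁻¹) ^ k := by rw [hrpow]; ring

theorem exists_uniform_consensus_rate (ι : Type*) [Fintype ι] [Nonempty ι] (M P : ℕ) {β : ℝ}
    (hβ₀ : 0 < β) (hβ₁ : β ≤ 1) :
    ∃ q, 0 ≤ q ∧ q < 1 ∧ ∀ {z : ℤ → ι → ℝ} {c : ℕ → ι → ι → ℝ} {D : ℕ → ι → ι → ℤ},
      IsDelayedAveraging M z c D → (∀ k u, β ≤ c k u u) → JointlyRooted c β P →
      ∃ zbar C, 0 ≤ C ∧ ∀ (k : ℕ) u, |z k u - zbar| ≤ C * q ^ k := by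
  set L := M + Fintype.card ι * (P + M + 1)
  have hL : 0 < L := by have := Fintype.card_pos (α := ι); positivity
  have hβL : 0 < β ^ L := pow_pos hβ₀ L
  have hβL₁ : β ^ L ≤ 1 := pow_le_one₀ hβ₀.le hβ₁
  have hγ₀ : 0 < 1 - β ^ L / 2 := by linarith
  refine ⟨(1 - β ^ L / 2) ^ (L : ℝ)⁻¹, Real.rpow_nonneg hγ₀.le _,
    Real.rpow_lt_one hγ₀.le (by linarith) (by positivity), fun {z c D} hz hself hconn => ?_⟩
  obtain ⟨zbar, hzbar⟩ := hz.exists_abs_sub_le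
  have hspan : ∀ k, 0 ≤ windowMax M z k - windowMin M z k :=
    fun k => sub_nonneg.2 windowMin_le_windowMax
  have hanti : Antitone fun k => windowMax M z k - windowMin M z k :=
    fun k k' hkk => sub_le_sub (hz.windowMax_antitone hkk) (hz.windowMin_monotone hkk)
  refine ⟨zbar, _, div_nonneg (hspan 0) hγ₀.le, fun k u => (hzbar k u).trans ?_⟩
  exact hanti.le_geometric_of_le_mul (hspan 0) hγ₀ (by linarith) hL
    (fun k => hz.windowMax_sub_windowMin_le hβ₀.le hself hconn k) k

/-! ### Position and auxiliary layers -/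

theorem Finset.sum_ite_eq_add_sum_filter_ne {ι M : Type*} [Fintype ι] [DecidableEq ι]
    [AddCommMonoid M] (i : ι) (a : M) (f : ι → M) :
    ∑ j, (if j = i then a else f j) = a + ∑ j ∈ univ.filter (fun j => j ≠ i), f j := by
  rw [sum_ite, filter_eq', if_pos (mem_univ i), sum_singleton]

section Paired

variable {ι : Type*} [DecidableEq ι]

def pairedCoeff (θ : ι → ℝ) (κ δ : ℕ → ι → ℝ) (w : ℕ → ι → ι → ℝ) (k : ℕ) :
    ι ⊕ ι → ι ⊕ ι → ℝ
  | .inl i, .inl j => if j = i then 1 - θ i else 0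
  | .inl i, .inr j => if j = i then θ i else 0
  | .inr i, .inl j => if j = i then δ k i else w k i j
  | .inr i, .inr j => if j = i then κ k i else 0

def pairedDelay (τ : ℕ → ι → ι → ℕ) (k : ℕ) : ι ⊕ ι → ι ⊕ ι → ℤ
  | .inr i, .inl j => if j = i then k else k - τ k i j
  | _, _ => k

theorem le_pairedCoeff_self {θ : ι → ℝ} {κ δ : ℕ → ι → ℝ} {w : ℕ → ι → ι → ℝ} {β : ℝ}
    (hθ : ∀ i, β ≤ 1 - θ i) (hκ : ∀ k i, β ≤ κ k i) (k : ℕ) (u : ι ⊕ ι) :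
    β ≤ pairedCoeff θ κ δ w k u u := by
  rcases u with i | i <;> simp [pairedCoeff, hθ, hκ]

theorem jointlyRooted_paired {θ : ι → ℝ} {κ δ : ℕ → ι → ℝ} {w : ℕ → ι → ι → ℝ} {β : ℝ}
    {P : ℕ} (hθ : ∀ i, β ≤ θ i) (hδ : ∀ k i, β ≤ δ k i) (hconn : JointlyRooted w β P) :
    JointlyRooted (pairedCoeff θ κ δ w) β (P + 1) := by
  intro t
  obtain ⟨root, hroot⟩ := hconn t
  have hedge : ∀ j i, InfluencesDuring w β t P j i → Relation.ReflTransGen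
      (InfluencesDuring (pairedCoeff θ κ δ w) β t (P + 1)) (.inl j) (.inl i) := by
    rintro j i ⟨k, htk, hkt, hji, hw⟩
    refine .tail (b := .inr i) (.single ⟨k, htk, by omega, Sum.inl_ne_inr, ?_⟩)
      ⟨k, htk, by omega, Sum.inr_ne_inl, by simpa [pairedCoeff] using hθ i⟩
    simpa [pairedCoeff, hji] using hw
  have hpos := fun i => (hroot i).lift' Sum.inl hedge
  refine ⟨.inl root, ?_⟩
  rintro (i | i)
  · exact hpos i
  · exact (hpos i).tail ⟨t, le_rfl, by omega, Sum.inl_ne_inr, by simpa [pairedCoeff] using hδ t i⟩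

variable [Fintype ι]

theorem isDelayedAveraging_paired {M : ℕ} {X S : ℤ → ι → ℝ} {θ : ι → ℝ} {κ δ : ℕ → ι → ℝ}
    {w : ℕ → ι → ι → ℝ} {τ : ℕ → ι → ι → ℕ}
    (hθ₀ : ∀ i, 0 ≤ θ i) (hθ₁ : ∀ i, θ i ≤ 1) (hκ : ∀ k i, 0 ≤ κ k i) (hδ : ∀ k i, 0 ≤ δ k i)
    (hw : ∀ k i j, 0 ≤ w k i j)
    (hsum : ∀ k i, κ k i + δ k i + ∑ j ∈ univ.filter (fun j => j ≠ i), w k i j = 1)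
    (hτ : ∀ k i j, τ k i j ≤ M)
    (hX : ∀ (k : ℕ) i, X (k + 1) i = (1 - θ i) * X k i + θ i * S k i)
    (hS : ∀ (k : ℕ) i, S (k + 1) i = κ k i * S k i + δ k i * X k i
      + ∑ j ∈ univ.filter (fun j => j ≠ i), w k i j * X (k - τ k i j) j) :
    IsDelayedAveraging M (fun t => Sum.elim (X t) (S t)) (pairedCoeff θ κ δ w)
      (pairedDelay τ) where
  coeff_nonneg k u v := by
    rcases u with i | i <;> rcases v with j | j <;> dsimp only [pairedCoeff] <;> split_ifs <;>
      first | exact le_rfl | linarith [hθ₀ i, hθ₁ i, hκ k i, hδ k i, hw k i j]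
  sum_coeff k u := by
    rcases u with i | i <;>
      simp only [Fintype.sum_sum_type, pairedCoeff, sum_ite_eq', mem_univ, if_true,
        sum_ite_eq_add_sum_filter_ne]
    · ring
    · linarith [hsum k i]
  delay_self k u := by rcases u with i | i <;> simp [pairedDelay]
  delay_mem k u v := by
    rcases u with i | i <;> rcases v with j | j <;> simp only [pairedDelay, Set.mem_Icc] <;>
      (try split_ifs) <;> constructor <;> linarith [hτ k i j]
  step k u := by
    rcases u with i | i
    · simp [Fintype.sum_sum_type, pairedCoeff, pairedDelay, hX]
    · have hterm : ∀ j, pairedCoeff θ κ δ w k (.inr i) (.inl j) *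
            Sum.elim (X (pairedDelay τ k (.inr i) (.inl j)))
              (S (pairedDelay τ k (.inr i) (.inl j))) (.inl j)
          = if j = i then δ k i * X k i else w k i j * X (k - τ k i j) j := by
        intro j; by_cases hj : j = i <;> simp [pairedCoeff, pairedDelay, hj]
      simp only [Fintype.sum_sum_type, hterm, sum_ite_eq_add_sum_filter_ne]
      simp only [Sum.elim_inr, hS, ne_eq, pairedCoeff, pairedDelay, ite_mul, zero_mul, sum_ite_eq',
        mem_univ, ↓reduceIte]
      ring

end Paired

/-! ### The closed loop -/

theorem EuclideanSpace.norm_le_sum_abs_apply {ι : Type*} [Fintype ι] (x : EuclideanSpace ℝ ι) :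
    ‖x‖ ≤ ∑ l, |x l| := by
  refine (abs_le_of_sq_le_sq' ?_ (by positivity)).2
  rw [EuclideanSpace.norm_sq_eq]
  simpa [sq_abs] using sum_sq_le_sq_sum_of_nonneg (s := univ) fun l _ => abs_nonneg (x l)

theorem exists_rooted_of_windows {ι : Type*} {R : ℕ → ι → ι → Prop} {η : ℕ} {ks : ℕ → ℕ}
    (hks₀ : ks 0 = 0) (hks : ∀ m, ks m < ks (m + 1)) (hksη : ∀ m, ks (m + 1) - ks m ≤ η)
    (hconn : ∀ m, ∃ root, ∀ i, Relation.ReflTransGen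
      (fun u w => ∃ k, ks m ≤ k ∧ k < ks (m + 1) ∧ R k u w) root i) (t : ℕ) :
    ∃ root, ∀ i, Relation.ReflTransGen
      (fun u w => ∃ k, t ≤ k ∧ k < t + 2 * η ∧ R k u w) root i := by
  have hex : ∃ m, t ≤ ks m := ⟨t, (strictMono_nat_of_lt_succ hks).le_apply⟩
  obtain ⟨m, hm, hmin⟩ : ∃ m, t ≤ ks m ∧ ∀ m' < m, ks m' < t :=
    ⟨Nat.find hex, Nat.find_spec hex, fun m' h => not_le.1 (Nat.find_min hex h)⟩
  have hwin : ks (m + 1) ≤ t + 2 * η := by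
    have := hksη m
    cases m with
    | zero => rw [hks₀] at hm this; omega
    | succ m => have := hmin m m.lt_succ_self; have := hksη m; omega
  obtain ⟨root, hroot⟩ := hconn m
  refine ⟨root, fun i => Relation.ReflTransGen.mono ?_ _ _ (hroot i)⟩
  rintro u w ⟨k, hk₁, hk₂, hk⟩
  exact ⟨k, hm.trans hk₁, by omega, hk⟩

theorem p_zero_mul_le_of_gain {T : ℝ} (hT : 0 < T) {p e b : ℕ → ℝ} (he : ∀ k, e k ≤ 1)
    (hpT : ∀ k, p k * T ≤ 1) (hb : ∀ k, b k = (1 - e k * (1 - p k * T)) / T)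
    (hbp : ∀ k, b k ≤ p (k + 1)) (k : ℕ) : p 0 * T ≤ 1 - e k * (1 - p k * T) := by
  have hpb : ∀ k, p k * T ≤ 1 - e k * (1 - p k * T) := fun k => by
    nlinarith [mul_nonneg (sub_nonneg.2 (he k)) (sub_nonneg.2 (hpT k))]
  have hmono : Monotone p := monotone_nat_of_le_succ fun k =>
    ((le_div_iff₀ hT).2 (hpb k)).trans (hb k ▸ hbp k)
  exact (mul_le_mul_of_nonneg_right (hmono k.zero_le) hT.le).trans (hpb k)

theorem aux_state_update_eq {ι : Type*} (s : Finset ι) {T p₀ p e x v : ℝ} (a y : ι → ℝ)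
    (hp₀ : p₀ ≠ 0) :
    x + T * v + 2 / p₀ * (e * (v - p * T * v + ∑ j ∈ s, a j * T * (y j - x)))
      = (T * p₀ / 2 + e * (1 - p * T)) * (x + 2 / p₀ * v)
        + (1 - (T * p₀ / 2 + e * (1 - p * T)) - ∑ j ∈ s, 2 / p₀ * e * T * a j) * x
        + ∑ j ∈ s, 2 / p₀ * e * T * a j * y j := by
  have h₁ : ∑ j ∈ s, a j * T * (y j - x) = T * ∑ j ∈ s, a j * y j - T * x * ∑ j ∈ s, a j := by
    rw [mul_sum, mul_sum, ← sum_sub_distrib]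
    exact sum_congr rfl fun j _ => by ring
  have h₂ : ∑ j ∈ s, 2 / p₀ * e * T * a j * y j = 2 / p₀ * e * T * ∑ j ∈ s, a j * y j := by
    rw [mul_sum]
    exact sum_congr rfl fun j _ => by ring
  rw [h₁, h₂, ← mul_sum]
  field_simp
  ring

theorem abs_le_mul_of_abs_sub_le {p x v z C : ℝ} (hp : 0 < p) (hx : |x - z| ≤ C)
    (hS : |x + 2 / p * v - z| ≤ C) : |v| ≤ p * C := by
  have hv : v = p / 2 * ((x + 2 / p * v - z) - (x - z)) := by
    field_simp
    ring
  rw [hv, abs_mul, abs_of_pos (by positivity)]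
  calc p / 2 * |_ - _| ≤ p / 2 * (C + C) := by
        gcongr; exact (abs_sub _ _).trans (add_le_add hS hx)
    _ = p * C := by ring

section ScaledLoop

variable {ι : Type*} [Fintype ι] [DecidableEq ι] {r : ℕ}

/-- The closed loop once `S_{V_i}(y_i)` is written as `e_i • y_i`; `p_zero_mul_le` says
`p_i(0) ≤ b_i(k)`. -/
structure IsScaledLoop (T : ℝ) (M : ℕ) (x v : ℤ → ι → EuclideanSpace ℝ (Fin r))
    (y : ℕ → ι → EuclideanSpace ℝ (Fin r)) (a : ℕ → ι → ι → ℝ) (τ : ℕ → ι → ι → ℕ)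
    (p e : ℕ → ι → ℝ) (d : ι → ℝ) : Prop where
  T_pos : 0 < T
  a_nonneg : ∀ k i j, 0 ≤ a k i j
  delay_le : ∀ k i j, τ k i j ≤ M
  e_mem : ∀ k i, e k i ∈ Set.Icc 0 1
  p_zero_pos : ∀ i, 0 < p 0 i
  pT_mem : ∀ k i, p k i * T ∈ Set.Icc 0 1
  p_zero_mul_le : ∀ k i, p 0 i * T ≤ 1 - e k i * (1 - p k i * T)
  sum_a_le : ∀ k i, ∑ j ∈ univ.filter (fun j => j ≠ i), a k i j ≤ d i
  four_d_lt : ∀ i, 4 * d i < p 0 i ^ 2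
  x_succ : ∀ (k : ℕ) i, x (k + 1) i = x k i + T • v k i
  y_eq : ∀ (k : ℕ) i, y k i = v k i - (p k i * T) • v k i
    + ∑ j ∈ univ.filter (fun j => j ≠ i), (a k i j * T) • (x (k - τ k i j) j - x k i)
  v_succ : ∀ (k : ℕ) i, v (k + 1) i = e k i • y k i

noncomputable def scaledLoopState (x v : ℤ → ι → EuclideanSpace ℝ (Fin r)) (p : ℕ → ι → ℝ)
    (l : Fin r) (t : ℤ) : ι ⊕ ι → ℝ :=
  Sum.elim (fun i => x t i l) (fun i => x t i l + 2 / p 0 i * v t i l)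

noncomputable def scaledLoopCoeff (T : ℝ) (p e : ℕ → ι → ℝ) (a : ℕ → ι → ι → ℝ) :
    ℕ → ι ⊕ ι → ι ⊕ ι → ℝ :=
  pairedCoeff (fun i => T * p 0 i / 2) (fun k i => T * p 0 i / 2 + e k i * (1 - p k i * T))
    (fun k i => 1 - (T * p 0 i / 2 + e k i * (1 - p k i * T))
      - ∑ j ∈ univ.filter (fun j => j ≠ i), 2 / p 0 i * e k i * T * a k i j)
    (fun k i j => 2 / p 0 i * e k i * T * a k i j)

namespace IsScaledLoop

variable {T : ℝ} {M : ℕ} {x v : ℤ → ι → EuclideanSpace ℝ (Fin r)}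
  {y : ℕ → ι → EuclideanSpace ℝ (Fin r)} {a : ℕ → ι → ι → ℝ} {τ : ℕ → ι → ι → ℕ}
  {p e : ℕ → ι → ℝ} {d : ι → ℝ}

theorem margin_le (h : IsScaledLoop T M x v y a τ p e d) (k : ℕ) (i : ι) :
    T * (p 0 i ^ 2 - 4 * d i) / (2 * p 0 i) ≤ 1 - (T * p 0 i / 2 + e k i * (1 - p k i * T))
      - ∑ j ∈ univ.filter (fun j => j ≠ i), 2 / p 0 i * e k i * T * a k i j := by
  have hp := h.p_zero_pos i
  have hT := h.T_pos
  have hea : e k i * ∑ j ∈ univ.filter (fun j => j ≠ i), a k i j ≤ d i := by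
    have hA : 0 ≤ ∑ j ∈ univ.filter (fun j => j ≠ i), a k i j :=
      sum_nonneg fun j _ => h.a_nonneg k i j
    linarith [mul_le_of_le_one_left hA (h.e_mem k i).2, h.sum_a_le k i]
  have hsum : ∑ j ∈ univ.filter (fun j => j ≠ i), 2 / p 0 i * e k i * T * a k i j
      = 2 * T / p 0 i * (e k i * ∑ j ∈ univ.filter (fun j => j ≠ i), a k i j) := by
    rw [mul_sum, mul_sum]
    exact sum_congr rfl fun j _ => by ring
  have hmargin : T * (p 0 i ^ 2 - 4 * d i) / (2 * p 0 i) = T * p 0 i / 2 - 2 * T / p 0 i * d i := by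
    field_simp
    ring
  rw [hsum, hmargin]
  have := mul_le_mul_of_nonneg_left hea (by positivity : (0 : ℝ) ≤ 2 * T / p 0 i)
  linarith [h.p_zero_mul_le k i]

theorem isDelayedAveraging (h : IsScaledLoop T M x v y a τ p e d) (l : Fin r) :
    IsDelayedAveraging M (scaledLoopState x v p l) (scaledLoopCoeff T p e a) (pairedDelay τ) := by
  have hp := h.p_zero_pos
  have hT := h.T_pos
  refine isDelayedAveraging_paired (fun i => by have := hp i; positivity)
    (fun i => by linarith [(h.pT_mem 0 i).2]) (fun k i => ?_) (fun k i => ?_)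
    (fun k i j => ?_) (fun k i => by ring) h.delay_le (fun k i => ?_) (fun k i => ?_)
  · have := mul_nonneg (h.e_mem k i).1 (sub_nonneg.2 (h.pT_mem k i).2)
    have := hp i
    positivity
  · refine le_trans (div_nonneg (mul_nonneg hT.le ?_) (by linarith [hp i])) (h.margin_le k i)
    linarith [h.four_d_lt i]
  · have := (h.e_mem k i).1
    have := h.a_nonneg k i j
    have := hp i
    positivity
  · have := (hp i).ne'
    simp only [h.x_succ, PiLp.add_apply, PiLp.smul_apply, smul_eq_mul]
    field_simp
    ring
  · simp only [h.x_succ, h.v_succ, h.y_eq, PiLp.add_apply, PiLp.sub_apply, PiLp.smul_apply,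
      smul_eq_mul, WithLp.ofLp_sum, WithLp.ofLp_smul, WithLp.ofLp_sub, Finset.sum_apply,
      Pi.smul_apply, Pi.sub_apply]
    exact aux_state_update_eq _ _ _ (hp i).ne'

theorem exists_norm_le [Nonempty ι] (h : IsScaledLoop T M x v y a τ p e d) :
    ∃ B, ∀ t : ℤ, -(M : ℤ) ≤ t → ∀ i, ‖x t i‖ ≤ B := by
  choose B hB using fun l => (h.isDelayedAveraging l).exists_abs_le
  exact ⟨∑ l, B l, fun t ht i => (EuclideanSpace.norm_le_sum_abs_apply _).trans
    (sum_le_sum fun l _ => hB l t ht (.inl i))⟩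

theorem exists_norm_y_le [Nonempty ι] (h : IsScaledLoop T M x v y a τ p e d) {R : ι → ℝ}
    (hv : ∀ (k : ℕ) i, ‖v k i‖ ≤ R i) : ∃ Y : ι → ℝ, ∀ k i, ‖y k i‖ ≤ Y i := by
  obtain ⟨B, hB⟩ := h.exists_norm_le
  have hB₀ : 0 ≤ B := (norm_nonneg _).trans (hB 0 (by omega) (Classical.arbitrary ι))
  refine ⟨fun i => R i + d i * T * (2 * B), fun k i => ?_⟩
  have hT := h.T_pos
  have hself : ‖v k i - (p k i * T) • v k i‖ ≤ R i := by
    rw [show v k i - (p k i * T) • v k i = (1 - p k i * T) • v k i by rw [sub_smul, one_smul],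
      norm_smul, Real.norm_of_nonneg (sub_nonneg.2 (h.pT_mem k i).2)]
    exact (mul_le_of_le_one_left (norm_nonneg _) (by linarith [(h.pT_mem k i).1])).trans (hv k i)
  have hcoupling : ‖∑ j ∈ univ.filter (fun j => j ≠ i), (a k i j * T) • (x (k - τ k i j) j - x k i)‖
      ≤ d i * T * (2 * B) := by
    refine (norm_sum_le _ _).trans ?_
    calc _ ≤ ∑ j ∈ univ.filter (fun j => j ≠ i), a k i j * T * (2 * B) := sum_le_sum fun j _ => by
          rw [norm_smul, Real.norm_of_nonneg (mul_nonneg (h.a_nonneg k i j) hT.le)]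
          refine mul_le_mul_of_nonneg_left ((norm_sub_le _ _).trans ?_)
            (mul_nonneg (h.a_nonneg k i j) hT.le)
          linarith [hB (k - τ k i j) (by have := h.delay_le k i j; omega) j, hB k (by omega) i]
      _ = (∑ j ∈ univ.filter (fun j => j ≠ i), a k i j) * (T * (2 * B)) := by
          rw [sum_mul]; exact sum_congr rfl fun j _ => by ring
      _ ≤ d i * (T * (2 * B)) := by gcongr; exact h.sum_a_le k i
      _ = d i * T * (2 * B) := by ring
  rw [h.y_eq]
  exact (norm_add_le _ _).trans (add_le_add hself hcoupling)

theorem exists_rate [Nonempty ι] (h : IsScaledLoop T M x v y a τ p e d) {ε : ι → ℝ}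
    (hε : ∀ i, 0 < ε i) (he : ∀ k i, ε i ≤ e k i) {μ : ℝ} (hμ : 0 < μ)
    (halb : ∀ k i j, 0 < a k i j → μ ≤ a k i j) {P : ℕ}
    (hconn : ∀ t, ∃ root, ∀ i, Relation.ReflTransGen
      (fun u w => ∃ k, t ≤ k ∧ k < t + P ∧ 0 < a k w u) root i) :
    ∃ q, 0 ≤ q ∧ q < 1 ∧ ∀ l : Fin r, ∃ zbar C, 0 ≤ C ∧
      ∀ (k : ℕ) u, |scaledLoopState x v p l k u - zbar| ≤ C * q ^ k := by
  have hp := h.p_zero_pos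
  have hT := h.T_pos
  set β := univ.inf' univ_nonempty fun i => min (T * p 0 i / 2)
    (min (T * (p 0 i ^ 2 - 4 * d i) / (2 * p 0 i)) (2 / p 0 i * ε i * T * μ))
  have hβ₀ : 0 < β := (lt_inf'_iff _).2 fun i _ => by
    have := hp i; have := hε i; have := h.four_d_lt i
    exact lt_min (by positivity) (lt_min (div_pos (mul_pos hT (by linarith)) (by positivity))
      (by positivity))
  have hβ : ∀ i, β ≤ _ := fun i => inf'_le _ (mem_univ i)
  have hθ : ∀ i, β ≤ T * p 0 i / 2 := fun i => (hβ i).trans (min_le_left _ _)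
  have hθ₁ : ∀ i, T * p 0 i / 2 ≤ 1 / 2 := fun i => by linarith [(h.pT_mem 0 i).2]
  have hself : ∀ k u, β ≤ scaledLoopCoeff T p e a k u u :=
    le_pairedCoeff_self (fun i => by linarith [hθ i, hθ₁ i]) fun k i =>
      (hθ i).trans (le_add_of_nonneg_right
        (mul_nonneg (h.e_mem k i).1 (sub_nonneg.2 (h.pT_mem k i).2)))
  have hedge : ∀ k i j, 0 < a k i j → β ≤ 2 / p 0 i * e k i * T * a k i j := fun k i j ha => by
    have := hp i
    have := (hε i).le
    have := (h.e_mem k i).1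
    calc β ≤ 2 / p 0 i * ε i * T * μ := (hβ i).trans ((min_le_right _ _).trans (min_le_right _ _))
      _ ≤ 2 / p 0 i * e k i * T * a k i j := by
        gcongr
        exacts [he k i, halb k i j ha]
  have hroot : JointlyRooted (scaledLoopCoeff T p e a) β (P + 1) :=
    jointlyRooted_paired hθ (fun k i => ((hβ i).trans ((min_le_right _ _).trans
      (min_le_left _ _))).trans (h.margin_le k i)) (jointlyRooted_of_rooted hedge hconn)
  obtain ⟨q, hq₀, hq₁, hrate⟩ := exists_uniform_consensus_rate (ι ⊕ ι) M (P + 1) hβ₀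
    ((hθ (Classical.arbitrary ι)).trans ((hθ₁ _).trans (by norm_num)))
  exact ⟨q, hq₀, hq₁, fun l => hrate (h.isDelayedAveraging l) hself hroot⟩

theorem consensus [Nonempty ι] (h : IsScaledLoop T M x v y a τ p e d) {ε : ι → ℝ}
    (hε : ∀ i, 0 < ε i) (he : ∀ k i, ε i ≤ e k i) {μ : ℝ} (hμ : 0 < μ)
    (halb : ∀ k i j, 0 < a k i j → μ ≤ a k i j) {P : ℕ}
    (hconn : ∀ t, ∃ root, ∀ i, Relation.ReflTransGen
      (fun u w => ∃ k, t ≤ k ∧ k < t + P ∧ 0 < a k w u) root i) :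
    (∃ xbar : EuclideanSpace ℝ (Fin r), ∃ C : ℝ, 0 < C ∧ ∃ μ : ℝ, 0 < μ ∧ μ ≤ 1 ∧
      ∀ (k : ℕ) i, ‖x k i - xbar‖ ≤ C * (1 - μ) ^ k) ∧
    ∀ i, Filter.Tendsto (fun k : ℕ => v k i) Filter.atTop (nhds 0) := by
  obtain ⟨q, hq₀, hq₁, hrate⟩ := h.exists_rate hε he hμ halb hconn
  choose zbar C hC hz using hrate
  have hv : ∀ (k : ℕ) i l, |v k i l| ≤ p 0 i * (C l * q ^ k) := fun k i l =>
    abs_le_mul_of_abs_sub_le (h.p_zero_pos i) (hz l k (.inl i)) (hz l k (.inr i))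
  have hC₀ : 0 ≤ ∑ l, C l := sum_nonneg fun l _ => hC l
  refine ⟨⟨WithLp.toLp 2 zbar, ∑ l, C l + 1, by linarith, 1 - q, by linarith, by linarith,
    fun k i => ?_⟩, fun i => ?_⟩
  · calc ‖x k i - WithLp.toLp 2 zbar‖ ≤ ∑ l, |x k i l - zbar l| := by
          simpa using EuclideanSpace.norm_le_sum_abs_apply (x k i - WithLp.toLp 2 zbar)
      _ ≤ ∑ l, C l * q ^ k := sum_le_sum fun l _ => hz l k (.inl i)
      _ ≤ (∑ l, C l + 1) * (1 - (1 - q)) ^ k := by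
          rw [sub_sub_cancel, ← sum_mul]
          nlinarith [pow_nonneg hq₀ k]
  · refine squeeze_zero_norm (fun k => (EuclideanSpace.norm_le_sum_abs_apply _).trans
      (sum_le_sum fun l _ => hv k i l)) ?_
    simpa [← mul_sum, ← sum_mul, mul_assoc] using
      (tendsto_pow_atTop_nhds_zero_of_lt_one hq₀ hq₁).const_mul (p 0 i * ∑ l, C l)

end IsScaledLoop

end ScaledLoop

theorem stmt0_general
    (n r : ℕ) (hn : 1 ≤ n) (T : ℝ) (hT : 0 < T)
    (V : Fin n → Set (EuclideanSpace ℝ (Fin r)))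
    (x v : ℤ → Fin n → EuclideanSpace ℝ (Fin r))
    (a : ℕ → Fin n → Fin n → ℝ) (τ : ℕ → Fin n → Fin n → ℕ)
    (p : ℕ → Fin n → ℝ) (M : ℕ) (μc : ℝ) (hμc : 0 < μc)
    (ρlow d : Fin n → ℝ)
    -- Assumption 1 on the constraint sets
    (hVcl : ∀ i, IsClosed (V i))
    (hVbd : ∀ i, Bornology.IsBounded (V i))
    (hV0 : ∀ i, (0 : EuclideanSpace ℝ (Fin r)) ∈ V i)
    (hρlow : ∀ i, 0 < ρlow i ∧
      IsGLB {c : ℝ | ∃ y, y ∉ V i ∧ c = ‖SOp (V i) y‖} (ρlow i))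
    -- edge weights and delays
    (ha0 : ∀ k i j, 0 ≤ a k i j)
    (halb : ∀ k i j, 0 < a k i j → μc ≤ a k i j)
    (hτ : ∀ k i j, τ k i j ≤ M)
    -- auxiliary quantities π, y, e, b
    (π y : ℕ → Fin n → EuclideanSpace ℝ (Fin r)) (e b : ℕ → Fin n → ℝ)
    (hπ : ∀ (k : ℕ) (i : Fin n), π k i =
      ∑ j ∈ Finset.univ.filter (fun j => j ≠ i),
        (a k i j * T) • (x ((k : ℤ) - (τ k i j : ℤ)) j - x (k : ℤ) i))
    (hy : ∀ (k : ℕ) (i : Fin n),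
      y k i = v (k : ℤ) i - (p k i * T) • v (k : ℤ) i + π k i)
    (he : ∀ (k : ℕ) (i : Fin n),
      e k i = if y k i = 0 then 1 else ‖SOp (V i) (y k i)‖ / ‖y k i‖)
    (hb : ∀ (k : ℕ) (i : Fin n), b k i = (1 - e k i * (1 - p k i * T)) / T)
    -- dynamics: initial conditions for k < 0, initial velocity, and the closed loop
    (hv0 : ∀ i, v 0 i = SOp (V i) (v 0 i))
    (hdynx : ∀ (k : ℕ) (i : Fin n), x ((k : ℤ) + 1) i = x (k : ℤ) i + T • v (k : ℤ) i)
    (hdynv : ∀ (k : ℕ) (i : Fin n), v ((k : ℤ) + 1) i = SOp (V i) (y k i))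
    -- Assumption 2 on the gains
    (hpT : ∀ (k : ℕ) (i : Fin n), 0 < p k i * T ∧ p k i * T < 1)
    (hbp : ∀ (k : ℕ) (i : Fin n), 0 < b k i ∧ b k i ≤ p (k + 1) i ∧ p (k + 1) i < 1 / T)
    (hpd : ∀ (k : ℕ) (i : Fin n), (p k i) ^ 2 > 4 * d i ∧
      4 * d i ≥ 4 * ∑ j ∈ Finset.univ.filter (fun j => j ≠ i), a k i j)
    -- Assumption 3: joint connectivity
    (η : ℕ) (ks : ℕ → ℕ) (hks0 : ks 0 = 0)
    (hksmono : ∀ m, ks m < ks (m + 1)) (hksη : ∀ m, ks (m + 1) - ks m ≤ η)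
    (hconn : ∀ m, ∃ root : Fin n, ∀ i : Fin n,
      Relation.ReflTransGen
        (fun u w => ∃ k, ks m ≤ k ∧ k < ks (m + 1) ∧ 0 < a k w u) root i) :
    -- conclusions (a) and (b)
    (∃ xbar : EuclideanSpace ℝ (Fin r), ∃ C : ℝ, 0 < C ∧ ∃ μ : ℝ, 0 < μ ∧ μ ≤ 1 ∧
      ∀ (k : ℕ) (i : Fin n), ‖x (k : ℤ) i - xbar‖ ≤ C * (1 - μ) ^ k) ∧
    (∀ (k : ℕ) (i : Fin n), v (k : ℤ) i ∈ V i) ∧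
    (∀ i : Fin n,
      Filter.Tendsto (fun k : ℕ => v (k : ℤ) i) Filter.atTop (nhds 0)) := by
  have : Nonempty (Fin n) := ⟨⟨0, hn⟩⟩
  have hvV : ∀ (k : ℕ) i, v k i ∈ V i := by
    rintro (_ | k) i
    · exact hv0 i ▸ SOp.mem (hVcl i) (hV0 i) _
    · exact_mod_cast (hdynv k i).symm ▸ SOp.mem (hVcl i) (hV0 i) _
  have he' : ∀ k i, e k i = SOp.scaleFactor (V i) (y k i) := he
  have he₁ : ∀ k i, e k i ∈ Set.Icc 0 1 :=
    fun k i => he' k i ▸ SOp.scaleFactor_mem_Icc (hV0 i) _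
  have hloop : IsScaledLoop T M x v y a τ p e d :=
    { T_pos := hT
      a_nonneg := ha0
      delay_le := hτ
      e_mem := he₁
      p_zero_pos := fun i => pos_of_mul_pos_left (hpT 0 i).1 hT.le
      pT_mem := fun k i => ⟨(hpT k i).1.le, (hpT k i).2.le⟩
      p_zero_mul_le := fun k i => p_zero_mul_le_of_gain hT (fun k => (he₁ k i).2)
        (fun k => (hpT k i).2.le) (fun k => hb k i) (fun k => (hbp k i).2.1) k
      sum_a_le := fun k i => by linarith [(hpd k i).2]
      four_d_lt := fun i => (hpd 0 i).1
      x_succ := hdynx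
      y_eq := fun k i => by rw [hy, hπ]
      v_succ := fun k i => by rw [hdynv, he', SOp.eq_scaleFactor_smul (hV0 i)] }
  choose R hR using fun i => (hVbd i).exists_norm_le
  obtain ⟨Y, hY⟩ := hloop.exists_norm_y_le fun k i => hR i _ (hvV k i)
  choose ε hε hεe using fun i => SOp.exists_pos_le_scaleFactor (hV0 i) (hρlow i).1
    (fun z hz => (hρlow i).2.1 ⟨z, hz, rfl⟩) (hY · i)
  obtain ⟨hx, hv⟩ := hloop.consensus hε (fun k i => he' k i ▸ hεe i k) hμc halb
    (exists_rooted_of_windows hks0 hksmono hksη hconn)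
  exact ⟨hx, hvV, hv⟩

/-- the velocity-constrained consensus theorem (Theorem 1 of the paper).
Under Assumption 1 on the nonconvex velocity constraint sets `V i`, the closed loop
`x_i(k+1) = x_i(k) + v_i(k)T`, `v_i(k+1) = S_{V_i}(y_i(k))` with
`y_i(k) = v_i(k) − p_i(k)v_i(k)T + π_i(k)`,
`π_i(k) = Σ_{j≠i} a_{ij}(k)(x_j(k − τ_{ij}(k)) − x_i(k))T`, bounded delays
`τ_{ij}(k) ≤ M`, the gain conditions of Assumption 2, and the joint-connectivity
Assumption 3, achieves: (a) exponential consensus of the positions on some vector x̄,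
and (b) `v_i(k) ∈ V_i` for all `i, k ≥ 0` with `v_i(k) → 0`. -/
theorem stmt0
    (n r : ℕ) (hn : 1 ≤ n) (T : ℝ) (hT : 0 < T)
    (V : Fin n → Set (EuclideanSpace ℝ (Fin r)))
    (x v : ℤ → Fin n → EuclideanSpace ℝ (Fin r))
    (a : ℕ → Fin n → Fin n → ℝ) (τ : ℕ → Fin n → Fin n → ℕ)
    (p : ℕ → Fin n → ℝ) (M : ℕ) (μc : ℝ) (hμc : 0 < μc)
    (ρbar ρlow d : Fin n → ℝ)
    -- Assumption 1 on the constraint sets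
    (hVne : ∀ i, (V i).Nonempty) (hVcl : ∀ i, IsClosed (V i))
    (hVbd : ∀ i, Bornology.IsBounded (V i))
    (hV0 : ∀ i, (0 : EuclideanSpace ℝ (Fin r)) ∈ V i)
    (hρbar : ∀ i, 0 < ρbar i ∧
      IsGreatest {c : ℝ | ∃ y ∈ V i, c = ‖SOp (V i) y‖} (ρbar i))
    (hρlow : ∀ i, 0 < ρlow i ∧
      IsGLB {c : ℝ | ∃ y, y ∉ V i ∧ c = ‖SOp (V i) y‖} (ρlow i))
    -- edge weights and delays
    (ha0 : ∀ k i j, 0 ≤ a k i j)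
    (halb : ∀ k i j, 0 < a k i j → μc ≤ a k i j)
    (hτ : ∀ k i j, τ k i j ≤ M)
    -- auxiliary quantities π, y, e, b
    (π y : ℕ → Fin n → EuclideanSpace ℝ (Fin r)) (e b : ℕ → Fin n → ℝ)
    (hπ : ∀ (k : ℕ) (i : Fin n), π k i =
      ∑ j ∈ Finset.univ.filter (fun j => j ≠ i),
        (a k i j * T) • (x ((k : ℤ) - (τ k i j : ℤ)) j - x (k : ℤ) i))
    (hy : ∀ (k : ℕ) (i : Fin n),
      y k i = v (k : ℤ) i - (p k i * T) • v (k : ℤ) i + π k i)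
    (he : ∀ (k : ℕ) (i : Fin n),
      e k i = if y k i = 0 then 1 else ‖SOp (V i) (y k i)‖ / ‖y k i‖)
    (hb : ∀ (k : ℕ) (i : Fin n), b k i = (1 - e k i * (1 - p k i * T)) / T)
    -- dynamics: initial conditions for k < 0, initial velocity, and the closed loop
    (hneg : ∀ k : ℤ, k < 0 → ∀ i, x (k + 1) i = x k i + T • v k i)
    (hv0 : ∀ i, v 0 i = SOp (V i) (v 0 i))
    (hdynx : ∀ (k : ℕ) (i : Fin n), x ((k : ℤ) + 1) i = x (k : ℤ) i + T • v (k : ℤ) i)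
    (hdynv : ∀ (k : ℕ) (i : Fin n), v ((k : ℤ) + 1) i = SOp (V i) (y k i))
    -- Assumption 2 on the gains
    (hpT : ∀ (k : ℕ) (i : Fin n), 0 < p k i * T ∧ p k i * T < 1)
    (hbp : ∀ (k : ℕ) (i : Fin n), 0 < b k i ∧ b k i ≤ p (k + 1) i ∧ p (k + 1) i < 1 / T)
    (hd : ∀ i, 0 < d i)
    (hpd : ∀ (k : ℕ) (i : Fin n), (p k i) ^ 2 > 4 * d i ∧
      4 * d i ≥ 4 * ∑ j ∈ Finset.univ.filter (fun j => j ≠ i), a k i j)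
    -- Assumption 3: joint connectivity
    (η : ℕ) (ks : ℕ → ℕ) (hks0 : ks 0 = 0)
    (hksmono : ∀ m, ks m < ks (m + 1)) (hksη : ∀ m, ks (m + 1) - ks m ≤ η)
    (hconn : ∀ m, ∃ root : Fin n, ∀ i : Fin n,
      Relation.ReflTransGen
        (fun u w => ∃ k, ks m ≤ k ∧ k < ks (m + 1) ∧ 0 < a k w u) root i) :
    -- conclusions (a) and (b)
    (∃ xbar : EuclideanSpace ℝ (Fin r), ∃ C : ℝ, 0 < C ∧ ∃ μ : ℝ, 0 < μ ∧ μ ≤ 1 ∧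
      ∀ (k : ℕ) (i : Fin n), ‖x (k : ℤ) i - xbar‖ ≤ C * (1 - μ) ^ k) ∧
    (∀ (k : ℕ) (i : Fin n), v (k : ℤ) i ∈ V i) ∧
    (∀ i : Fin n,
      Filter.Tendsto (fun k : ℕ => v (k : ℤ) i) Filter.atTop (nhds 0)) :=
  stmt0_general n r hn T hT V x v a τ p M μc hμc ρlow d hVcl hVbd hV0 hρlow ha0 halb hτ π y e b hπ
    hy he hb hv0 hdynx hdynv hpT hbp hpd η ks hks0 hksmono hksη hconn
end DelayedAveraging
end

section
/- Let n ≥ 1, γ ∈ (0,1], and let (W_k)_{k≥0} be a sequence of row-stochastic n×n matrices such that every diagonal entry of every W_k is at least γ and every nonzero entry of every W_k is at least γ. Suppose there exist integers 0 = k_0 < k_1 < k_2 < ⋯ with k_{m+1} − k_m ≤ η for all m, such that for each m the directed graph on {1,…,n} with an edge from j to i whenever (W_k)_{ij} > 0 for some k ∈ [k_m, k_{m+1}) contains a node having a directed path to every other node. Then there exist a positive integer n̂ and a constant μ̂ ∈ (0,1] such that for every m there is an index q (possibly depending on m) with (W_{k_{m+n̂}−1}·W_{k_{m+n̂}−2}···W_{k_m})_{iq}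 ≥ μ̂ for all i ∈ {1,…,n}. -/
/-- A real matrix is row-stochastic if all its entries are nonnegative and each of its
rows sums to 1. -/
def RowStochastic {n : ℕ} (A : Matrix (Fin n) (Fin n) ℝ) : Prop :=
  (∀ i j, 0 ≤ A i j) ∧ ∀ i, ∑ j, A i j = 1

/-- `leftProd W s t = W (s+t-1) * ⋯ * W (s+1) * W s` (the product of `t` consecutive
factors starting at index `s`, with later factors multiplied on the left). -/
noncomputable def leftProd {n : ℕ} (W : ℕ → Matrix (Fin n) (Fin n) ℝ) (s : ℕ) :
    ℕ → Matrix (Fin n) (Fin n) ℝ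
  | 0 => 1
  | t + 1 => W (s + t) * leftProd W s t

lemma entry_mul_ge {n : ℕ} {A B : Matrix (Fin n) (Fin n) ℝ}
    (hA : ∀ i j, 0 ≤ A i j) (hB : ∀ i j, 0 ≤ B i j) (i j q : Fin n) :
    A i j * B j q ≤ (A * B) i q := by
  rw [Matrix.mul_apply]
  exact Finset.single_le_sum (fun k _ => mul_nonneg (hA i k) (hB k q)) (Finset.mem_univ j)

lemma leftProd_nonneg {n : ℕ} {W : ℕ → Matrix (Fin n) (Fin n) ℝ}
    (hW : ∀ k i j, 0 ≤ W k i j) (s t : ℕ) : ∀ i j, 0 ≤ leftProd W s t i j := by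
  induction t with
  | zero =>
    intro i j
    by_cases h : i = j <;> simp [leftProd, Matrix.one_apply, h]
  | succ t ih =>
    intro i j
    rw [show leftProd W s (t + 1) = W (s + t) * leftProd W s t from rfl, Matrix.mul_apply]
    exact Finset.sum_nonneg fun k _ => mul_nonneg (hW _ _ _) (ih k j)

lemma leftProd_diag {n : ℕ} {γ : ℝ} (hγ0 : 0 ≤ γ) {W : ℕ → Matrix (Fin n) (Fin n) ℝ}
    (hW : ∀ k i j, 0 ≤ W k i j) (hdiag : ∀ k i, γ ≤ W k i i) (s t : ℕ) (i : Fin n) :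
    γ ^ t ≤ leftProd W s t i i := by
  induction t with
  | zero => simp [leftProd, Matrix.one_apply_eq]
  | succ t ih =>
    calc γ ^ (t + 1) = γ * γ ^ t := by ring
    _ ≤ W (s + t) i i * leftProd W s t i i :=
        mul_le_mul (hdiag _ _) ih (pow_nonneg hγ0 _) (hW _ _ _)
    _ ≤ (W (s + t) * leftProd W s t) i i :=
        entry_mul_ge (hW _) (leftProd_nonneg hW s t) i i i
    _ = leftProd W s (t + 1) i i := rfl

lemma leftProd_add {n : ℕ} (W : ℕ → Matrix (Fin n) (Fin n) ℝ) (s a b : ℕ) :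
    leftProd W s (a + b) = leftProd W (s + a) b * leftProd W s a := by
  induction b with
  | zero => simp [leftProd]
  | succ b ih =>
    calc leftProd W s (a + (b + 1)) = W (s + (a + b)) * leftProd W s (a + b) := rfl
    _ = W (s + a + b) * (leftProd W (s + a) b * leftProd W s a) := by rw [ih, add_assoc]
    _ = leftProd W (s + a) (b + 1) * leftProd W s a := by
        rw [← mul_assoc]; rfl

lemma leftProd_entry_of_pos {n : ℕ} {γ : ℝ} (hγ0 : 0 ≤ γ)
    {W : ℕ → Matrix (Fin n) (Fin n) ℝ}
    (hW : ∀ k i j, 0 ≤ W k i j) (hdiag : ∀ k i, γ ≤ W k i i)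
    (hγW : ∀ k i j, 0 < W k i j → γ ≤ W k i j)
    (s len k : ℕ) (hk1 : s ≤ k) (hk2 : k < s + len) (i j : Fin n)
    (hpos : 0 < W k i j) : γ ^ len ≤ leftProd W s len i j := by
  set a := k - s with ha
  set c := s + len - (k + 1) with hc
  have hlen : len = a + (1 + c) := by omega
  have hk : k = s + a := by omega
  have hAB : leftProd W s len =
      (leftProd W (k + 1) c * leftProd W k 1) * leftProd W s a := by
    rw [hlen, leftProd_add, leftProd_add, ← hk]
  have hB : ∀ i' j', leftProd W k 1 i' j' = W k i' j' := by
    intro i' j'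
    show (W (k + 0) * (1 : Matrix (Fin n) (Fin n) ℝ)) i' j' = _
    simp
  have hBnn : ∀ i' j', 0 ≤ leftProd W k 1 i' j' := leftProd_nonneg hW k 1
  have hABnn : ∀ i' j', 0 ≤ (leftProd W (k + 1) c * leftProd W k 1) i' j' := by
    intro i' j'
    rw [Matrix.mul_apply]
    exact Finset.sum_nonneg fun u _ => mul_nonneg (leftProd_nonneg hW _ _ _ _) (hBnn _ _)
  calc γ ^ len = (γ ^ c * γ) * γ ^ a := by rw [hlen]; ring
  _ ≤ (leftProd W (k + 1) c i i * leftProd W k 1 i j) * leftProd W s a j j := by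
      apply mul_le_mul
      · apply mul_le_mul (leftProd_diag hγ0 hW hdiag _ _ _) _ hγ0 (leftProd_nonneg hW _ _ _ _)
        rw [hB]; exact hγW _ _ _ hpos
      · exact leftProd_diag hγ0 hW hdiag _ _ _
      · exact pow_nonneg hγ0 _
      · exact mul_nonneg (leftProd_nonneg hW _ _ _ _) (hBnn _ _)
  _ ≤ (leftProd W (k + 1) c * leftProd W k 1) i j * leftProd W s a j j := by
      apply mul_le_mul_of_nonneg_right _ (leftProd_nonneg hW _ _ _ _)
      exact entry_mul_ge (leftProd_nonneg hW _ _) hBnn i i j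
  _ ≤ ((leftProd W (k + 1) c * leftProd W k 1) * leftProd W s a) i j :=
      entry_mul_ge hABnn (leftProd_nonneg hW _ _) i j j
  _ = leftProd W s len i j := by rw [hAB]

lemma cross_lemma {α : Type*} {R : α → α → Prop} {S : Set α} {a b : α}
    (h : Relation.ReflTransGen R a b) (ha : a ∈ S) (hb : b ∉ S) :
    ∃ u w, u ∈ S ∧ w ∉ S ∧ R u w := by
  induction h with
  | refl => exact absurd ha hb
  | @tail x y hax hxy ih =>
    by_cases hx : x ∈ S
    · exact ⟨x, y, hx, hb, hxy⟩
    · exact ih hx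

/-- sequence of row-stochastic matrices with diagonal entries ≥ γ and
nonzero entries ≥ γ, jointly connected over intervals [k_m, k_{m+1}) of length ≤ η
(the union graph having a directed spanning tree).  Then there exist a positive integer
n̂ and μ̂ ∈ (0,1] such that for every m there is a column q with
(W_{k_{m+n̂}−1}···W_{k_m})_{iq} ≥ μ̂ for all i. -/
theorem stmt13 (n : ℕ) (hn : 1 ≤ n) (γ : ℝ) (hγ0 : 0 < γ) (hγ1 : γ ≤ 1)
    (W : ℕ → Matrix (Fin n) (Fin n) ℝ)
    (hstoch : ∀ k, RowStochastic (W k))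
    (hdiag : ∀ k i, γ ≤ W k i i)
    (hnz : ∀ k i j, W k i j ≠ 0 → γ ≤ W k i j)
    (η : ℕ) (ks : ℕ → ℕ) (hks0 : ks 0 = 0)
    (hksmono : ∀ m, ks m < ks (m + 1)) (hksη : ∀ m, ks (m + 1) - ks m ≤ η)
    (hconn : ∀ m, ∃ root : Fin n, ∀ i : Fin n,
      Relation.ReflTransGen
        (fun u w => ∃ k, ks m ≤ k ∧ k < ks (m + 1) ∧ 0 < W k w u) root i) :
    ∃ nhat : ℕ, 0 < nhat ∧ ∃ μhat : ℝ, 0 < μhat ∧ μhat ≤ 1 ∧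
      ∀ m, ∃ q : Fin n, ∀ i,
        μhat ≤ leftProd W (ks m) (ks (m + nhat) - ks m) i q := by
  classical
  have hWnn : ∀ k i j, 0 ≤ W k i j := fun k => (hstoch k).1
  have hγW : ∀ k i j, 0 < W k i j → γ ≤ W k i j := fun k i j h => hnz k i j (ne_of_gt h)
  have hγ0' : (0:ℝ) ≤ γ := le_of_lt hγ0
  have hmono : Monotone ks := (strictMono_nat_of_lt_succ hksmono).monotone
  refine ⟨n ^ 2, pow_pos hn 2, γ ^ (n ^ 2 * η), pow_pos hγ0 _, pow_le_one₀ hγ0' hγ1, ?_⟩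
  intro m
  set root : ℕ → Fin n := fun t => (hconn t).choose with hrootdef
  have hroot : ∀ t i, Relation.ReflTransGen
      (fun u w => ∃ k, ks t ≤ k ∧ k < ks (t + 1) ∧ 0 < W k w u) (root t) i :=
    fun t => (hconn t).choose_spec
  -- pigeonhole: some root value repeats at least n-1 times among the first n² intervals
  obtain ⟨ρ, -, hρ⟩ := Finset.exists_lt_card_fiber_of_mul_lt_card_of_maps_to
    (s := Finset.range (n ^ 2)) (t := (Finset.univ : Finset (Fin n)))
    (f := fun t => root (m + t)) (n := n - 2)
    (fun x _ => Finset.mem_univ _)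
    (by
      rw [Finset.card_univ, Fintype.card_fin, Finset.card_range]
      have h1 : n - 2 < n := by omega
      calc n * (n - 2) < n * n := (Nat.mul_lt_mul_left hn).mpr h1
      _ = n ^ 2 := (sq n).symm)
  set L : ℕ → ℕ := fun t => ks (m + t) - ks m with hLdef
  set P : ℕ → Matrix (Fin n) (Fin n) ℝ := fun t => leftProd W (ks m) (L t) with hPdef
  set S : ℕ → Finset (Fin n) :=
    fun t => Finset.univ.filter (fun i => γ ^ (L t) ≤ P t i ρ) with hSdef
  set d : ℕ → ℕ := fun t => ks (m + t + 1) - ks (m + t) with hddef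
  have hks1 : ∀ t, ks m ≤ ks (m + t) := fun t => hmono (Nat.le_add_right m t)
  have hks2 : ∀ t, ks (m + t) < ks (m + t + 1) := fun t => hksmono (m + t)
  have hLd : ∀ t, L (t + 1) = L t + d t := by
    intro t
    have h1 := hks1 t
    have h2 := hks2 t
    have h3 : m + (t + 1) = m + t + 1 := rfl
    simp only [hLdef, hddef, h3]
    omega
  have hsplit : ∀ t, P (t + 1) = leftProd W (ks (m + t)) (d t) * P t := by
    intro t
    have h1 : ks m + L t = ks (m + t) := by
      have := hks1 t; simp only [hLdef]; omega
    simp only [hPdef, hLd t]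
    rw [leftProd_add, h1]
  have hPnn : ∀ t i j, 0 ≤ P t i j := fun t => leftProd_nonneg hWnn _ _
  have hQnn : ∀ t, ∀ i j, 0 ≤ leftProd W (ks (m + t)) (d t) i j :=
    fun t => leftProd_nonneg hWnn _ _
  have hmonoS : ∀ t, S t ⊆ S (t + 1) := by
    intro t i hi
    simp only [hSdef, Finset.mem_filter, Finset.mem_univ, true_and] at hi ⊢
    calc γ ^ L (t + 1) = γ ^ (d t) * γ ^ (L t) := by rw [hLd t, pow_add, mul_comm]
    _ ≤ leftProd W (ks (m + t)) (d t) i i * P t i ρ :=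
        mul_le_mul (leftProd_diag hγ0' hWnn hdiag _ _ _) hi (pow_nonneg hγ0' _) (hQnn t i i)
    _ ≤ (leftProd W (ks (m + t)) (d t) * P t) i ρ :=
        entry_mul_ge (hQnn t) (hPnn t) i i ρ
    _ = P (t + 1) i ρ := by rw [hsplit t]
  have hρS0 : ρ ∈ S 0 := by
    have hL0 : L 0 = 0 := by simp [hLdef]
    simp only [hSdef, Finset.mem_filter, Finset.mem_univ, true_and, hPdef, hL0]
    show (1:ℝ) ≤ (1 : Matrix (Fin n) (Fin n) ℝ) ρ ρ
    rw [Matrix.one_apply_eq]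
  have hρS : ∀ t, ρ ∈ S t := by
    intro t
    induction t with
    | zero => exact hρS0
    | succ t ih => exact hmonoS t ih
  have growth : ∀ t, root (m + t) = ρ → S t ≠ Finset.univ →
      ∃ w, w ∉ S t ∧ w ∈ S (t + 1) := by
    intro t hr hU
    obtain ⟨i, hi⟩ : ∃ i, i ∉ S t := by
      by_contra h
      push_neg at h
      exact hU (Finset.eq_univ_of_forall h)
    have hpath := hroot (m + t) i
    rw [hr] at hpath
    obtain ⟨u, w, hu, hw, k, hk1, hk2, hpos⟩ :=
      cross_lemma (S := (↑(S t) : Set (Fin n))) hpath (hρS t) (by exact_mod_cast hi)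
    refine ⟨w, hw, ?_⟩
    have huS : γ ^ (L t) ≤ P t u ρ := by
      have := hu
      simp only [Finset.coe_filter, Set.mem_setOf_eq, hSdef, Finset.mem_univ, true_and] at this
      exact this
    have hQ : γ ^ (d t) ≤ leftProd W (ks (m + t)) (d t) w u := by
      apply leftProd_entry_of_pos hγ0' hWnn hdiag hγW _ _ k hk1 _ _ _ hpos
      have := hks2 t
      simp only [hddef]
      omega
    simp only [hSdef, Finset.mem_filter, Finset.mem_univ, true_and]
    calc γ ^ L (t + 1) = γ ^ (d t) * γ ^ (L t) := by rw [hLd t, pow_add, mul_comm]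
    _ ≤ leftProd W (ks (m + t)) (d t) w u * P t u ρ :=
        mul_le_mul hQ huS (pow_nonneg hγ0' _) (hQnn t w u)
    _ ≤ (leftProd W (ks (m + t)) (d t) * P t) w ρ :=
        entry_mul_ge (hQnn t) (hPnn t) w u ρ
    _ = P (t + 1) w ρ := by rw [hsplit t]
  set occ : ℕ → ℕ :=
    fun t => ((Finset.range t).filter (fun r => root (m + r) = ρ)).card with hoccdef
  have key : ∀ t, min n (1 + occ t) ≤ (S t).card := by
    intro t
    induction t with
    | zero =>
      have h1 : 1 ≤ (S 0).card := Finset.card_pos.mpr ⟨ρ, hρS0⟩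
      have h2 : occ 0 = 0 := by simp [hoccdef]
      omega
    | succ t ih =>
      have hcardle : (S (t + 1)).card ≤ n := by
        have := Finset.card_le_univ (S (t + 1))
        simpa using this
      by_cases hU : S t = Finset.univ
      · have : Finset.univ ⊆ S (t + 1) := hU ▸ hmonoS t
        have hcard : (S (t + 1)).card = n := by
          have := Finset.univ_subset_iff.mp this
          rw [this, Finset.card_univ, Fintype.card_fin]
        omega
      · have hoccle : occ (t + 1) ≤ occ t + 1 ∧ occ t ≤ occ (t + 1) := by
          constructor <;>
          · simp only [hoccdef, Finset.range_add_one, Finset.filter_insert]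
            split
            · rw [Finset.card_insert_of_notMem (by simp)] <;> omega
            · omega
        by_cases hr : root (m + t) = ρ
        · obtain ⟨w, hw1, hw2⟩ := growth t hr hU
          have h1 : (S t).card < (S (t + 1)).card :=
            Finset.card_lt_card ⟨hmonoS t, fun hsub => hw1 (hsub hw2)⟩
          have hocc : occ (t + 1) = occ t + 1 := by
            simp only [hoccdef, Finset.range_add_one, Finset.filter_insert, if_pos hr]
            rw [Finset.card_insert_of_notMem (by simp)]
          omega
        · have h1 : (S t).card ≤ (S (t + 1)).card := Finset.card_le_card (hmonoS t)
          have hocc : occ (t + 1) = occ t := by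
            simp only [hoccdef, Finset.range_add_one, Finset.filter_insert, if_neg hr]
          omega
  have hocc2 : n - 1 ≤ occ (n ^ 2) := by
    have := hρ
    simp only [hoccdef]
    omega
  have hSfull : S (n ^ 2) = Finset.univ := by
    apply Finset.eq_univ_of_card
    have h1 := key (n ^ 2)
    have h2 : (S (n ^ 2)).card ≤ n := by simpa using Finset.card_le_univ (S (n ^ 2))
    rw [Fintype.card_fin]
    omega
  refine ⟨ρ, fun i => ?_⟩
  have hiS : i ∈ S (n ^ 2) := hSfull ▸ Finset.mem_univ i
  simp only [hSdef, Finset.mem_filter, Finset.mem_univ, true_and] at hiS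
  have hLbound : ∀ t, L t ≤ t * η := by
    intro t
    induction t with
    | zero => simp [hLdef]
    | succ t ih =>
      have hd : d t ≤ η := hksη (m + t)
      rw [hLd t]
      calc L t + d t ≤ t * η + η := Nat.add_le_add ih hd
      _ = (t + 1) * η := by ring
  calc γ ^ (n ^ 2 * η) ≤ γ ^ (L (n ^ 2)) :=
      pow_le_pow_of_le_one hγ0' hγ1 (hLbound (n ^ 2))
  _ ≤ P (n ^ 2) i ρ := hiS
end

section
/- Let μ ∈ (0,1], let A be a row-stochastic real n×n matrix having a column q with A_{iq} ≥ μ for all i, and let B be any real n×m matrix. Then for every column index j: max_i (A·B)_{ij} − min_i (A·B)_{ij} ≤ (1 − μ)·(max_i B_{ij} − min_i B_{ij}). -/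
/-- Let μ ∈ (0,1], let A be a row-stochastic n×n matrix having a column q
with A_{iq} ≥ μ for all i, and let B be any real n×m matrix. Then for every column j:
max_i (A·B)_{ij} − min_i (A·B)_{ij} ≤ (1 − μ)·(max_i B_{ij} − min_i B_{ij}). -/
theorem stmt15 (n m : ℕ) (hn : 0 < n) (μ : ℝ) (hμ0 : 0 < μ) (hμ1 : μ ≤ 1)
    (A : Matrix (Fin n) (Fin n) ℝ) (B : Matrix (Fin n) (Fin m) ℝ)
    (hA : RowStochastic A) (q : Fin n) (hq : ∀ i, μ ≤ A i q) :
    ∀ j : Fin m,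
      Finset.univ.sup' (⟨⟨0, hn⟩, Finset.mem_univ _⟩ : (Finset.univ : Finset (Fin n)).Nonempty)
          (fun i => (A * B) i j) -
        Finset.univ.inf' ⟨⟨0, hn⟩, Finset.mem_univ _⟩ (fun i => (A * B) i j) ≤
      (1 - μ) *
        (Finset.univ.sup' (⟨⟨0, hn⟩, Finset.mem_univ _⟩ : (Finset.univ : Finset (Fin n)).Nonempty)
            (fun i => B i j) -
          Finset.univ.inf' ⟨⟨0, hn⟩, Finset.mem_univ _⟩ (fun i => B i j)) := by
  intro j
  have ne : (Finset.univ : Finset (Fin n)).Nonempty := ⟨⟨0, hn⟩, Finset.mem_univ _⟩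
  set M := Finset.univ.sup' ne (fun i => B i j) with hM
  set L := Finset.univ.inf' ne (fun i => B i j) with hL
  have hBM : ∀ k, B k j ≤ M := fun k => Finset.le_sup' (fun i => B i j) (Finset.mem_univ k)
  have hBL : ∀ k, L ≤ B k j := fun k => Finset.inf'_le (fun i => B i j) (Finset.mem_univ k)
  have hc0 : ∀ i k, 0 ≤ A i k - if k = q then μ else 0 := by
    intro i k
    by_cases h : k = q
    · simp [h]; linarith [hq i]
    · simp [h, hA.1 i k]
  have hcsum : ∀ i, ∑ k, (A i k - if k = q then μ else 0) = 1 - μ := by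
    intro i
    rw [Finset.sum_sub_distrib, hA.2 i, Finset.sum_ite_eq' Finset.univ q (fun _ => μ)]
    simp
  have hsplit : ∀ i, (A * B) i j
      = (∑ k, (A i k - if k = q then μ else 0) * B k j) + μ * B q j := by
    intro i
    rw [Matrix.mul_apply]
    have : ∀ k ∈ Finset.univ, A i k * B k j
        = (A i k - if k = q then μ else 0) * B k j + (if k = q then μ * B q j else 0) := by
      intro k _
      by_cases h : k = q <;> simp [h] <;> ring
    rw [Finset.sum_congr rfl this, Finset.sum_add_distrib,
      Finset.sum_ite_eq' Finset.univ q (fun _ => μ * B q j)]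
    simp
  have hup : ∀ i, (A * B) i j ≤ μ * B q j + (1 - μ) * M := by
    intro i
    rw [hsplit i]
    have : ∑ k, (A i k - if k = q then μ else 0) * B k j
        ≤ ∑ k, (A i k - if k = q then μ else 0) * M :=
      Finset.sum_le_sum fun k _ => mul_le_mul_of_nonneg_left (hBM k) (hc0 i k)
    rw [← Finset.sum_mul, hcsum i] at this
    linarith
  have hlo : ∀ i, μ * B q j + (1 - μ) * L ≤ (A * B) i j := by
    intro i
    rw [hsplit i]
    have : ∑ k, (A i k - if k = q then μ else 0) * L
        ≤ ∑ k, (A i k - if k = q then μ else 0) * B k j :=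
      Finset.sum_le_sum fun k _ => mul_le_mul_of_nonneg_left (hBL k) (hc0 i k)
    rw [← Finset.sum_mul, hcsum i] at this
    linarith
  have h1 : Finset.univ.sup' ne (fun i => (A * B) i j) ≤ μ * B q j + (1 - μ) * M :=
    Finset.sup'_le _ _ fun i _ => hup i
  have h2 : μ * B q j + (1 - μ) * L ≤ Finset.univ.inf' ne (fun i => (A * B) i j) :=
    Finset.le_inf' _ _ fun i _ => hlo i
  have := h1
  have := h2
  linarith
end

section
/- Let μ ∈ (0,1] and let A_1, …, A_h be row-stochastic real n×n matrices such that each A_t has some column q_t (possibly depending on t) with (A_t)_{i q_t} ≥ μ for all i. Let P = A_h·A_{h−1}···A_1. Then for every column index j: max_i P_{ij} − min_i P_{ij} ≤ (1 − μ)^h. -/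
lemma osc_contract {n : ℕ} (hne : (Finset.univ : Finset (Fin n)).Nonempty)
    (μ : ℝ) (hμ1 : μ ≤ 1)
    (B : Matrix (Fin n) (Fin n) ℝ) (hB : RowStochastic B)
    (q : Fin n) (hq : ∀ i, μ ≤ B i q) (v : Fin n → ℝ) :
    Finset.univ.sup' hne (B.mulVec v) - Finset.univ.inf' hne (B.mulVec v) ≤
      (1 - μ) * (Finset.univ.sup' hne v - Finset.univ.inf' hne v) := by
  obtain ⟨hBnn, hBsum⟩ := hB
  set M := Finset.univ.sup' hne v with hM
  set m := Finset.univ.inf' hne v with hm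
  have key : ∀ i, ∀ w : ℝ, (∀ k, B i k * v k ≤ B i k * w → True) → True := fun _ _ _ => trivial
  have upper : ∀ i, B.mulVec v i ≤ μ * v q + (1 - μ) * M := by
    intro i
    have hsplit : B.mulVec v i =
        μ * v q + ∑ k, (B i k - if k = q then μ else 0) * v k := by
      simp only [Matrix.mulVec, dotProduct, sub_mul]
      rw [Finset.sum_sub_distrib]
      have : ∑ k, (if k = q then μ else 0) * v k = μ * v q := by
        simp [Finset.sum_ite_eq']
      rw [this]; ring
    rw [hsplit]
    gcongr μ * v q + ?_
    have hb : ∑ k, (B i k - if k = q then μ else 0) * v k ≤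
        ∑ k, (B i k - if k = q then μ else 0) * M := by
      apply Finset.sum_le_sum
      intro k _
      have hc : 0 ≤ B i k - if k = q then μ else 0 := by
        by_cases hk : k = q
        · simp [hk]; linarith [hq i]
        · simp [hk]; exact hBnn i k
      exact mul_le_mul_of_nonneg_left (Finset.le_sup' v (Finset.mem_univ k)) hc
    calc ∑ k, (B i k - if k = q then μ else 0) * v k
        ≤ ∑ k, (B i k - if k = q then μ else 0) * M := hb
      _ = (1 - μ) * M := by
          rw [← Finset.sum_mul, Finset.sum_sub_distrib, hBsum]
          simp [Finset.sum_ite_eq']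
  have lower : ∀ i, μ * v q + (1 - μ) * m ≤ B.mulVec v i := by
    intro i
    have hsplit : B.mulVec v i =
        μ * v q + ∑ k, (B i k - if k = q then μ else 0) * v k := by
      simp only [Matrix.mulVec, dotProduct, sub_mul]
      rw [Finset.sum_sub_distrib]
      have : ∑ k, (if k = q then μ else 0) * v k = μ * v q := by
        simp [Finset.sum_ite_eq']
      rw [this]; ring
    rw [hsplit]
    gcongr μ * v q + ?_
    have hb : ∑ k, (B i k - if k = q then μ else 0) * m ≤
        ∑ k, (B i k - if k = q then μ else 0) * v k := by
      apply Finset.sum_le_sum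
      intro k _
      have hc : 0 ≤ B i k - if k = q then μ else 0 := by
        by_cases hk : k = q
        · simp [hk]; linarith [hq i]
        · simp [hk]; exact hBnn i k
      exact mul_le_mul_of_nonneg_left (Finset.inf'_le v (Finset.mem_univ k)) hc
    calc (1 - μ) * m = ∑ k, (B i k - if k = q then μ else 0) * m := by
          rw [← Finset.sum_mul, Finset.sum_sub_distrib, hBsum]
          simp [Finset.sum_ite_eq']
      _ ≤ ∑ k, (B i k - if k = q then μ else 0) * v k := hb
  have hs : Finset.univ.sup' hne (B.mulVec v) ≤ μ * v q + (1 - μ) * M :=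
    Finset.sup'_le hne _ fun i _ => upper i
  have hi : μ * v q + (1 - μ) * m ≤ Finset.univ.inf' hne (B.mulVec v) :=
    Finset.le_inf' hne _ fun i _ => lower i
  nlinarith [hs, hi]

/-- Let μ ∈ (0,1] and let A_0, …, A_{h-1} be row-stochastic n×n matrices,
each having some column q_t with (A_t)_{i q_t} ≥ μ for all i. Let P = A_{h-1}···A_0.
Then for every column index j: max_i P_{ij} − min_i P_{ij} ≤ (1 − μ)^h. -/
theorem stmt16 (n : ℕ) (hn : 0 < n) (μ : ℝ) (hμ0 : 0 < μ) (hμ1 : μ ≤ 1)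
    (h : ℕ) (A : ℕ → Matrix (Fin n) (Fin n) ℝ)
    (hA : ∀ t < h, RowStochastic (A t))
    (hcol : ∀ t < h, ∃ q : Fin n, ∀ i, μ ≤ A t i q) :
    ∀ j : Fin n,
      Finset.univ.sup' (⟨⟨0, hn⟩, Finset.mem_univ _⟩ : (Finset.univ : Finset (Fin n)).Nonempty)
          (fun i => leftProd A 0 h i j) -
        Finset.univ.inf' ⟨⟨0, hn⟩, Finset.mem_univ _⟩ (fun i => leftProd A 0 h i j) ≤
      (1 - μ) ^ h := by
  intro j
  set hne : (Finset.univ : Finset (Fin n)).Nonempty := ⟨⟨0, hn⟩, Finset.mem_univ _⟩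
  induction h with
  | zero =>
    simp only [leftProd, pow_zero]
    have h1 : Finset.univ.sup' hne (fun i => (1 : Matrix (Fin n) (Fin n) ℝ) i j) ≤ 1 := by
      apply Finset.sup'_le
      intro i _
      by_cases hij : i = j <;> simp [Matrix.one_apply, hij]
    have h2 : (0 : ℝ) ≤ Finset.univ.inf' hne (fun i => (1 : Matrix (Fin n) (Fin n) ℝ) i j) := by
      apply Finset.le_inf'
      intro i _
      by_cases hij : i = j <;> simp [Matrix.one_apply, hij]
    linarith
  | succ t ih =>
    have ih' := ih (fun s hs => hA s (Nat.lt_succ_of_lt hs))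
      (fun s hs => hcol s (Nat.lt_succ_of_lt hs))
    obtain ⟨q, hq⟩ := hcol t (Nat.lt_succ_self t)
    have hBst := hA t (Nat.lt_succ_self t)
    have heq : (fun i => leftProd A 0 (t + 1) i j) =
        (A t).mulVec (fun k => leftProd A 0 t k j) := by
      funext i
      simp [leftProd, Matrix.mul_apply, Matrix.mulVec, dotProduct]
    rw [heq]
    calc Finset.univ.sup' hne ((A t).mulVec fun k => leftProd A 0 t k j) -
          Finset.univ.inf' hne ((A t).mulVec fun k => leftProd A 0 t k j)
        ≤ (1 - μ) * (Finset.univ.sup' hne (fun i => leftProd A 0 t i j) -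
            Finset.univ.inf' hne (fun i => leftProd A 0 t i j)) :=
          osc_contract hne μ hμ1 (A t) hBst q hq _
      _ ≤ (1 - μ) * (1 - μ) ^ t := by
          apply mul_le_mul_of_nonneg_left ih' (by linarith)
      _ = (1 - μ) ^ (t + 1) := by ring
end
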